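/- If G is a graph containing a path X of length 4 whose three internal vertices all have degree 2 in G and whose two end vertices are distinct, then M(G) is homotopy equivalent to the suspension of M(G/X), where G/X is obtained from G by contracting the path X to a single edge joining its two endpoints (possibly creating parallel edges). -/

import Mathlib

noncomputable section

/-- The geometric realization of a set of faces `K` (an abstract simplicial complex):
the space of convex-combination weight functions supported on a face. -/
def realization {α : Type*} (K : Set (Finset α)) : Type _ :=
  {f : α → ℝ // (∀ a, 0 ≤ f a) ∧ ∃ s ∈ K, Function.support f ⊆ ↑s ∧ ∑ a ∈ s, f a = 1}

instance realization.topologicalSpace {α : Type*} (K : Set (Finset α)) :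
    TopologicalSpace (realization K) :=
  instTopologicalSpaceSubtype

/-- The unreduced suspension of a space: the cylinder `X × [0,1]` together with two cone
points, gluing `X × {0}` to one and `X × {1}` to the other.  (With this definition, the
suspension of the empty space is the two-point space `S⁰`.) -/
def Susp (X : Type*) [TopologicalSpace X] : Type _ :=
  Quot (fun (p q : (X × Set.Icc (0:ℝ) 1) ⊕ Bool) =>
    match p, q with
    | Sum.inl p, Sum.inr b => ((p.2 : ℝ) = 0 ∧ b = false) ∨ ((p.2 : ℝ) = 1 ∧ b = true)
    | _, _ => False)

instance Susp.topologicalSpace (X : Type*) [TopologicalSpace X] :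
    TopologicalSpace (Susp X) := by
  unfold Susp; infer_instance

/-- The wedge sum of two pointed spaces. -/
def Wedge (X : Type*) (Y : Type*) [TopologicalSpace X] [TopologicalSpace Y]
    (x : X) (y : Y) : Type _ :=
  Quot (fun (a b : X ⊕ Y) => a = Sum.inl x ∧ b = Sum.inr y)

instance Wedge.topologicalSpace (X : Type*) (Y : Type*) [TopologicalSpace X]
    [TopologicalSpace Y] (x : X) (y : Y) : TopologicalSpace (Wedge X Y x y) := by
  unfold Wedge; infer_instance

/-- The `n`-sphere, as the unit sphere in `ℝ^(n+1)`. -/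
def nSphere (n : ℕ) : Type :=
  Metric.sphere (0 : EuclideanSpace ℝ (Fin (n + 1))) 1

instance nSphere.topologicalSpace (n : ℕ) : TopologicalSpace (nSphere n) := by
  unfold nSphere; infer_instance

/-- A basepoint on the `n`-sphere. -/
def spherePt (n : ℕ) : nSphere n :=
  ⟨EuclideanSpace.single 0 1, by simp [EuclideanSpace.norm_single]⟩

/-- The wedge of a family of spheres, of dimensions `n i`. -/
def WedgeOfSpheres {ι : Type} (n : ι → ℕ) : Type :=
  Quot (fun (a b : Σ i, nSphere (n i)) =>
    ∃ i j, a = ⟨i, spherePt (n i)⟩ ∧ b = ⟨j, spherePt (n j)⟩)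

instance WedgeOfSpheres.topologicalSpace {ι : Type} (n : ι → ℕ) :
    TopologicalSpace (WedgeOfSpheres n) := by
  unfold WedgeOfSpheres; infer_instance

/-- A space is (homotopy equivalent to) a wedge of spheres if it is homotopy equivalent to a
wedge of finitely many spheres of possibly varying dimensions. -/
def IsWedgeOfSpheres (X : Type*) [TopologicalSpace X] : Prop :=
  ∃ (k : ℕ) (n : Fin k → ℕ), Nonempty (ContinuousMap.HomotopyEquiv X (WedgeOfSpheres n))
/-- The matching complex of a simple graph: faces are finite sets of pairwise disjoint edges. -/
def matchingComplex {V : Type*} (G : SimpleGraph V) : Set (Finset (Sym2 V)) :=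
  {s | (∀ e ∈ s, e ∈ G.edgeSet) ∧ ∀ e ∈ s, ∀ f ∈ s, e ≠ f → ∀ v, v ∈ e → v ∉ f}

/-- The open edge neighborhood `EN(e)`: the set of edges of `G` adjacent to (sharing a vertex
with) `e`, other than `e` itself. -/
def edgeNbhdOpen {V : Type*} (G : SimpleGraph V) (e : Sym2 V) : Set (Sym2 V) :=
  {f | f ∈ G.edgeSet ∧ f ≠ e ∧ ∃ v, v ∈ e ∧ v ∈ f}

/-- The closed edge neighborhood `EN[e]`: the set of edges of `G` sharing a vertex with `e`,
together with `e` itself. -/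
def edgeNbhdClosed {V : Type*} (G : SimpleGraph V) (e : Sym2 V) : Set (Sym2 V) :=
  {f | f ∈ G.edgeSet ∧ ∃ v, v ∈ e ∧ v ∈ f}

/-- Two chords of a circle, with endpoints at circle positions `a, b` and `c, d`
(positions measured injectively along the circle), cross iff their endpoints interleave. -/
def chordsCross (a b c d : ℝ) : Prop :=
  (min a b < min c d ∧ min c d < max a b ∧ max a b < max c d) ∨
  (min c d < min a b ∧ min a b < max c d ∧ max c d < max a b)

/-- A graph is outerplanar iff it has a drawing with all vertices (injectively) on a circle
and edges drawn as pairwise noncrossing chords; equivalently, a planar drawing with every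
vertex on the unbounded face. -/
def Outerplanar {V : Type*} (G : SimpleGraph V) : Prop :=
  ∃ f : V ↪ ℝ, ∀ a b c d, G.Adj a b → G.Adj c d →
    a ≠ c → a ≠ d → b ≠ c → b ≠ d → ¬ chordsCross (f a) (f b) (f c) (f d)

/-- An outerplanar graph is maximal outerplanar if adding any edge destroys outerplanarity. -/
def MaximalOuterplanar {V : Type*} (G : SimpleGraph V) : Prop :=
  Outerplanar G ∧ ∀ a b : V, a ≠ b → ¬ G.Adj a b →
    ¬ Outerplanar (G ⊔ SimpleGraph.fromEdgeSet {s(a, b)})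
/-- A cutpoint (cut-vertex) of a graph: a vertex whose removal disconnects two vertices that
were connected, i.e. whose removal increases the number of connected components. -/
def IsCutvertex {V : Type*} (G : SimpleGraph V) (v : V) : Prop :=
  ∃ a b : {u : V // u ≠ v}, G.Reachable a.1 b.1 ∧
    ¬ (G.induce {u : V | u ≠ v}).Reachable ⟨a.1, a.2⟩ ⟨b.1, b.2⟩

/-- A block of `G`: a maximal connected subgraph having no cutpoint of itself. -/
def IsBlock {V : Type*} (G : SimpleGraph V) (H : G.Subgraph) : Prop :=
  H.Connected ∧ (∀ v, ¬ IsCutvertex H.coe v) ∧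
    ∀ H' : G.Subgraph, H ≤ H' → H'.Connected → (∀ v, ¬ IsCutvertex H'.coe v) → H' = H

/-- The block-cutpoint graph of `G`: the bipartite graph on blocks and cutpoints of `G`,
with a block `B` adjacent to a cutpoint `c` iff `c` belongs to `B`. -/
def blockCutpointGraph {V : Type*} (G : SimpleGraph V) :
    SimpleGraph ({H : G.Subgraph // IsBlock G H} ⊕ {v : V // IsCutvertex G v}) :=
  SimpleGraph.fromRel (fun x y =>
    ∃ B c, x = Sum.inl B ∧ y = Sum.inr c ∧ c.1 ∈ B.1.verts)

/-- A cycle (given as a closed walk) is chordless if every edge of `G` joining two of its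
vertices is an edge of the cycle.  In an outerplanar graph drawn with all vertices on the
unbounded face, the basic cycles (boundaries of the bounded faces) are exactly the
chordless cycles. -/
def Chordless {V : Type*} (G : SimpleGraph V) {v : V} (p : G.Walk v v) : Prop :=
  ∀ a ∈ p.support, ∀ b ∈ p.support, G.Adj a b → s(a, b) ∈ p.edges

/-- The basic cycles of (an outerplanar graph) `G`, recorded by their edge sets. -/
def basicCycles {V : Type*} [DecidableEq V] (G : SimpleGraph V) : Set (Finset (Sym2 V)) :=
  {s | ∃ (v : V) (p : G.Walk v v), p.IsCycle ∧ Chordless G p ∧ s = p.edges.toFinset}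

/-- The weak dual of (an outerplanar graph) `G`: vertices are the basic cycles (bounded
faces), two being adjacent iff they share at least one edge. -/
def weakDual {V : Type*} [DecidableEq V] (G : SimpleGraph V) :
    SimpleGraph (basicCycles G) :=
  SimpleGraph.fromRel (fun s t => ((s.1 ∩ t.1) : Finset (Sym2 V)).Nonempty)

/-- A multigraph on vertex set `V`: an edge index type together with an assignment of
(unordered pairs of) endpoints. -/
structure Multigraph (V : Type u) : Type (max u (v + 1)) where
  E : Type v
  ends : E → Sym2 V

/-- The matching complex of a multigraph: faces are finite sets of pairwise
vertex-disjoint edges. -/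
def Multigraph.matchingComplex {V : Type*} (M : Multigraph V) : Set (Finset M.E) :=
  {s | ∀ i ∈ s, ∀ j ∈ s, i ≠ j → ∀ v, v ∈ M.ends i → v ∉ M.ends j}
open Classical in
/-- Bundled hypotheses for the path-contraction theorem. -/
structure PCSetup (V : Type*) where
  G : SimpleGraph V
  v0 : V
  v1 : V
  v2 : V
  v3 : V
  v4 : V
  hnd : ([v0, v1, v2, v3, v4] : List V).Nodup
  h01 : G.Adj v0 v1
  h12 : G.Adj v1 v2
  h23 : G.Adj v2 v3
  h34 : G.Adj v3 v4
  hd1 : (G.neighborSet v1).ncard = 2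
  hd2 : (G.neighborSet v2).ncard = 2
  hd3 : (G.neighborSet v3).ncard = 2

namespace PCSetup

variable {V : Type*} (S : PCSetup V)

def ea : Sym2 V := s(S.v0, S.v1)
def eb : Sym2 V := s(S.v1, S.v2)
def ec : Sym2 V := s(S.v2, S.v3)
def ed : Sym2 V := s(S.v3, S.v4)

/-- The contracted multigraph. -/
@[reducible] def MG : Multigraph V :=
  ⟨Option {e : Sym2 V // e ∈ S.G.edgeSet ∧
      e ∉ ({s(S.v0, S.v1), s(S.v1, S.v2), s(S.v2, S.v3), s(S.v3, S.v4)} : Set (Sym2 V))},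
    fun o => o.elim s(S.v0, S.v4) Subtype.val⟩

lemma ne01 : S.v0 ≠ S.v1 := by have := S.hnd; simp [List.nodup_cons] at this; tauto
lemma ne02 : S.v0 ≠ S.v2 := by have := S.hnd; simp [List.nodup_cons] at this; tauto
lemma ne03 : S.v0 ≠ S.v3 := by have := S.hnd; simp [List.nodup_cons] at this; tauto
lemma ne04 : S.v0 ≠ S.v4 := by have := S.hnd; simp [List.nodup_cons] at this; tauto
lemma ne12 : S.v1 ≠ S.v2 := by have := S.hnd; simp [List.nodup_cons] at this; tauto
lemma ne13 : S.v1 ≠ S.v3 := by have := S.hnd; simp [List.nodup_cons] at this; tauto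
lemma ne14 : S.v1 ≠ S.v4 := by have := S.hnd; simp [List.nodup_cons] at this; tauto
lemma ne23 : S.v2 ≠ S.v3 := by have := S.hnd; simp [List.nodup_cons] at this; tauto
lemma ne24 : S.v2 ≠ S.v4 := by have := S.hnd; simp [List.nodup_cons] at this; tauto
lemma ne34 : S.v3 ≠ S.v4 := by have := S.hnd; simp [List.nodup_cons] at this; tauto

lemma nbhd1 : S.G.neighborSet S.v1 = {S.v0, S.v2} := by
  refine (Set.eq_of_subset_of_ncard_le ?_ ?_ ?_).symm
  · intro x hx
    rcases hx with h | h
    · subst h; exact S.h01.symm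
    · simp only [Set.mem_singleton_iff] at h; subst h; exact S.h12
  · rw [S.hd1, Set.ncard_pair S.ne02]
  · by_contra h
    have := Set.Infinite.ncard (s := S.G.neighborSet S.v1) h
    rw [S.hd1] at this; simp at this

lemma nbhd2 : S.G.neighborSet S.v2 = {S.v1, S.v3} := by
  refine (Set.eq_of_subset_of_ncard_le ?_ ?_ ?_).symm
  · intro x hx
    rcases hx with h | h
    · subst h; exact S.h12.symm
    · simp only [Set.mem_singleton_iff] at h; subst h; exact S.h23
  · rw [S.hd2, Set.ncard_pair S.ne13]
  · by_contra h
    have := Set.Infinite.ncard (s := S.G.neighborSet S.v2) h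
    rw [S.hd2] at this; simp at this

lemma nbhd3 : S.G.neighborSet S.v3 = {S.v2, S.v4} := by
  refine (Set.eq_of_subset_of_ncard_le ?_ ?_ ?_).symm
  · intro x hx
    rcases hx with h | h
    · subst h; exact S.h23.symm
    · simp only [Set.mem_singleton_iff] at h; subst h; exact S.h34
  · rw [S.hd3, Set.ncard_pair S.ne24]
  · by_contra h
    have := Set.Infinite.ncard (s := S.G.neighborSet S.v3) h
    rw [S.hd3] at this; simp at this

/-- Any edge of `G` containing `v1` is `ea` or `eb`. -/
lemma edge_v1 {e : Sym2 V} (he : e ∈ S.G.edgeSet) (hv : S.v1 ∈ e) : e = S.ea ∨ e = S.eb := by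
  induction e with
  | _ x y =>
    rcases Sym2.mem_iff.mp hv with rfl | rfl
    · have : y ∈ S.G.neighborSet S.v1 := (SimpleGraph.mem_edgeSet S.G).mp he
      rw [S.nbhd1] at this
      rcases this with h | h
      · subst h; left; rw [ea, Sym2.eq_swap]
      · simp only [Set.mem_singleton_iff] at h; subst h; right; rfl
    · have : x ∈ S.G.neighborSet S.v1 := ((SimpleGraph.mem_edgeSet S.G).mp he).symm
      rw [S.nbhd1] at this
      rcases this with h | h
      · subst h; left; rfl
      · simp only [Set.mem_singleton_iff] at h; subst h; right; rw [eb, Sym2.eq_swap]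

lemma edge_v2 {e : Sym2 V} (he : e ∈ S.G.edgeSet) (hv : S.v2 ∈ e) : e = S.eb ∨ e = S.ec := by
  induction e with
  | _ x y =>
    rcases Sym2.mem_iff.mp hv with rfl | rfl
    · have : y ∈ S.G.neighborSet S.v2 := (SimpleGraph.mem_edgeSet S.G).mp he
      rw [S.nbhd2] at this
      rcases this with h | h
      · subst h; left; rw [eb, Sym2.eq_swap]
      · simp only [Set.mem_singleton_iff] at h; subst h; right; rfl
    · have : x ∈ S.G.neighborSet S.v2 := ((SimpleGraph.mem_edgeSet S.G).mp he).symm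
      rw [S.nbhd2] at this
      rcases this with h | h
      · subst h; left; rfl
      · simp only [Set.mem_singleton_iff] at h; subst h; right; rw [ec, Sym2.eq_swap]

lemma edge_v3 {e : Sym2 V} (he : e ∈ S.G.edgeSet) (hv : S.v3 ∈ e) : e = S.ec ∨ e = S.ed := by
  induction e with
  | _ x y =>
    rcases Sym2.mem_iff.mp hv with rfl | rfl
    · have : y ∈ S.G.neighborSet S.v3 := (SimpleGraph.mem_edgeSet S.G).mp he
      rw [S.nbhd3] at this
      rcases this with h | h
      · subst h; left; rw [ec, Sym2.eq_swap]
      · simp only [Set.mem_singleton_iff] at h; subst h; right; rfl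
    · have : x ∈ S.G.neighborSet S.v3 := ((SimpleGraph.mem_edgeSet S.G).mp he).symm
      rw [S.nbhd3] at this
      rcases this with h | h
      · subst h; left; rfl
      · simp only [Set.mem_singleton_iff] at h; subst h; right; rw [ed, Sym2.eq_swap]

lemma mem_ea {v : V} : v ∈ S.ea ↔ v = S.v0 ∨ v = S.v1 := Sym2.mem_iff
lemma mem_eb {v : V} : v ∈ S.eb ↔ v = S.v1 ∨ v = S.v2 := Sym2.mem_iff
lemma mem_ec {v : V} : v ∈ S.ec ↔ v = S.v2 ∨ v = S.v3 := Sym2.mem_iff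
lemma mem_ed {v : V} : v ∈ S.ed ↔ v = S.v3 ∨ v = S.v4 := Sym2.mem_iff

lemma ea_ne_eb : S.ea ≠ S.eb := by
  intro h; rw [ea, eb, Sym2.eq_iff] at h
  rcases h with ⟨h, _⟩ | ⟨h, _⟩
  exacts [S.ne01 h, S.ne02 h]
lemma ea_ne_ec : S.ea ≠ S.ec := by
  intro h; rw [ea, ec, Sym2.eq_iff] at h
  rcases h with ⟨h, _⟩ | ⟨h, _⟩
  exacts [S.ne02 h, S.ne03 h]
lemma ea_ne_ed : S.ea ≠ S.ed := by
  intro h; rw [ea, ed, Sym2.eq_iff] at h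
  rcases h with ⟨h, _⟩ | ⟨h, _⟩
  exacts [S.ne03 h, S.ne04 h]
lemma eb_ne_ec : S.eb ≠ S.ec := by
  intro h; rw [eb, ec, Sym2.eq_iff] at h
  rcases h with ⟨h, _⟩ | ⟨h, _⟩
  exacts [S.ne12 h, S.ne13 h]
lemma eb_ne_ed : S.eb ≠ S.ed := by
  intro h; rw [eb, ed, Sym2.eq_iff] at h
  rcases h with ⟨h, _⟩ | ⟨h, _⟩
  exacts [S.ne13 h, S.ne14 h]
lemma ec_ne_ed : S.ec ≠ S.ed := by
  intro h; rw [ec, ed, Sym2.eq_iff] at h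
  rcases h with ⟨h, _⟩ | ⟨h, _⟩
  exacts [S.ne23 h, S.ne24 h]

lemma ea_edge : S.ea ∈ S.G.edgeSet := S.h01
lemma eb_edge : S.eb ∈ S.G.edgeSet := S.h12
lemma ec_edge : S.ec ∈ S.G.edgeSet := S.h23
lemma ed_edge : S.ed ∈ S.G.edgeSet := S.h34

end PCSetup
namespace PCAux

/-- Clamp a real number to `[0,1]`. -/
def clamp (r : ℝ) : ℝ := max 0 (min r 1)

lemma clamp_nonneg (r : ℝ) : 0 ≤ clamp r := le_max_left _ _
lemma clamp_le_one (r : ℝ) : clamp r ≤ 1 := max_le (by norm_num) (min_le_right _ _)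
lemma clamp_of_nonpos {r : ℝ} (h : r ≤ 0) : clamp r = 0 := by
  rw [clamp, max_eq_left]; exact le_trans (min_le_left _ _) h
lemma clamp_of_one_le {r : ℝ} (h : 1 ≤ r) : clamp r = 1 := by
  rw [clamp, min_eq_right h, max_eq_right (by norm_num)]
lemma clamp_le {r u : ℝ} (h : r ≤ u) (hu : 0 ≤ u) : clamp r ≤ u :=
  max_le hu (le_trans (min_le_left _ _) h)
lemma le_clamp {r u : ℝ} (h : u ≤ r) (hu : r ≤ 1) : u ≤ clamp r := by
  rcases le_or_gt u 0 with h0 | h0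
  · exact le_trans h0 (clamp_nonneg r)
  · exact le_trans (le_min h (le_trans h hu)) (le_max_right _ _)
lemma clamp_continuous : Continuous clamp := by
  unfold clamp; fun_prop

/-- Coefficient of `b` along the suspension path. -/
def cb (t : ℝ) : ℝ := max (1 - 3 * t) 0
/-- Coefficient of `c`. -/
def cc (t : ℝ) : ℝ := max (3 * t - 2) 0
/-- Coefficient of `a` (to be multiplied by the weight of `e₀`). -/
def ra (t : ℝ) : ℝ := max 0 (min (3 * t - 1) (3 - 3 * t))
/-- Coefficient of `d`. -/
def rd (t : ℝ) : ℝ := max 0 (min (3 * t) (2 - 3 * t))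
/-- Scale on the outside part. -/
def rl (t : ℝ) : ℝ := max 0 (min (min (3 * t) 1) (3 - 3 * t))

lemma cb_nonneg (t : ℝ) : 0 ≤ cb t := le_max_right _ _
lemma cc_nonneg (t : ℝ) : 0 ≤ cc t := le_max_right _ _
lemma ra_nonneg (t : ℝ) : 0 ≤ ra t := le_max_left _ _
lemma rd_nonneg (t : ℝ) : 0 ≤ rd t := le_max_left _ _
lemma rl_nonneg (t : ℝ) : 0 ≤ rl t := le_max_left _ _

lemma cb_continuous : Continuous cb := by unfold cb; fun_prop
lemma cc_continuous : Continuous cc := by unfold cc; fun_prop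
lemma ra_continuous : Continuous ra := by unfold ra; fun_prop
lemma rd_continuous : Continuous rd := by unfold rd; fun_prop
lemma rl_continuous : Continuous rl := by unfold rl; fun_prop

lemma cb_pos {t : ℝ} (h : 0 < cb t) : t < 1/3 := by
  rw [cb, lt_max_iff] at h
  rcases h with h | h
  · linarith
  · exact absurd h (lt_irrefl 0)
lemma cc_pos {t : ℝ} (h : 0 < cc t) : 2/3 < t := by
  rw [cc, lt_max_iff] at h
  rcases h with h | h
  · linarith
  · exact absurd h (lt_irrefl 0)
lemma ra_pos {t : ℝ} (h : 0 < ra t) : 1/3 < t ∧ t < 1 := by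
  rw [ra, lt_max_iff] at h
  rcases h with h | h
  · exact absurd h (lt_irrefl 0)
  · rw [lt_min_iff] at h; constructor <;> linarith [h.1, h.2]
lemma rd_pos {t : ℝ} (h : 0 < rd t) : 0 < t ∧ t < 2/3 := by
  rw [rd, lt_max_iff] at h
  rcases h with h | h
  · exact absurd h (lt_irrefl 0)
  · rw [lt_min_iff] at h; constructor <;> linarith [h.1, h.2]
lemma rl_pos {t : ℝ} (h : 0 < rl t) : 0 < t ∧ t < 1 := by
  rw [rl, lt_max_iff] at h
  rcases h with h | h
  · exact absurd h (lt_irrefl 0)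
  · rw [lt_min_iff, lt_min_iff] at h; constructor <;> linarith [h.1.1, h.2]

lemma cb_eq_zero {t : ℝ} (h : 1/3 ≤ t) : cb t = 0 := by
  rw [cb, max_eq_right]; linarith
lemma cc_eq_zero {t : ℝ} (h : t ≤ 2/3) : cc t = 0 := by
  rw [cc, max_eq_right]; linarith
lemma ra_eq_zero {t : ℝ} (h : t ≤ 1/3 ∨ 1 ≤ t) : ra t = 0 := by
  rw [ra, max_eq_left]
  rcases h with h | h
  · exact le_trans (min_le_left _ _) (by linarith)
  · exact le_trans (min_le_right _ _) (by linarith)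
lemma rd_eq_zero {t : ℝ} (h : t ≤ 0 ∨ 2/3 ≤ t) : rd t = 0 := by
  rw [rd, max_eq_left]
  rcases h with h | h
  · exact le_trans (min_le_left _ _) (by linarith)
  · exact le_trans (min_le_right _ _) (by linarith)
lemma rl_eq_zero {t : ℝ} (h : t ≤ 0 ∨ 1 ≤ t) : rl t = 0 := by
  rw [rl, max_eq_left]
  rcases h with h | h
  · exact le_trans (min_le_left _ _) (le_trans (min_le_left _ _) (by linarith))
  · exact le_trans (min_le_right _ _) (by linarith)

lemma cb_zero : cb 0 = 1 := by norm_num [cb]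
lemma cc_one : cc 1 = 1 := by norm_num [cc]

lemma cb_le_one {t : ℝ} (h : 0 ≤ t) : cb t ≤ 1 := max_le (by linarith) (by norm_num)
lemma cc_le_one {t : ℝ} (h : t ≤ 1) : cc t ≤ 1 := max_le (by linarith) (by norm_num)
lemma ra_le_one (t : ℝ) : ra t ≤ 1 := by
  rw [ra]; apply max_le (by norm_num)
  rcases le_or_gt (3*t-1) (3-3*t) with h | h
  · rw [min_eq_left h]; nlinarith
  · rw [min_eq_right h.le]; nlinarith
lemma rd_le_one (t : ℝ) : rd t ≤ 1 := by
  rw [rd]; apply max_le (by norm_num)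
  rcases le_or_gt (3*t) (2-3*t) with h | h
  · rw [min_eq_left h]; nlinarith
  · rw [min_eq_right h.le]; nlinarith
lemma rl_le_one (t : ℝ) : rl t ≤ 1 :=
  max_le (by norm_num) (le_trans (min_le_left _ _) (min_le_right _ _))

/-- Phase value lemmas. -/
lemma cb_val1 {t : ℝ} (h : t ≤ 1/3) : cb t = 1 - 3*t := max_eq_left (by linarith)
lemma rd_val1 {t : ℝ} (h0 : 0 ≤ t) (h : t ≤ 1/3) : rd t = 3*t := by
  rw [rd, min_eq_left (by linarith), max_eq_right (by linarith)]
lemma rl_val1 {t : ℝ} (h0 : 0 ≤ t) (h : t ≤ 1/3) : rl t = 3*t := by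
  rw [rl, min_eq_left (by linarith : (3:ℝ)*t ≤ 1), min_eq_left (by linarith),
    max_eq_right (by linarith)]
lemma ra_val2 {t : ℝ} (h : 1/3 ≤ t) (h' : t ≤ 2/3) : ra t = 3*t - 1 := by
  rw [ra, min_eq_left (by linarith), max_eq_right (by linarith)]
lemma rd_val2 {t : ℝ} (h : 1/3 ≤ t) (h' : t ≤ 2/3) : rd t = 2 - 3*t := by
  rw [rd, min_eq_right (by linarith), max_eq_right (by linarith)]
lemma rl_val2 {t : ℝ} (h : 1/3 ≤ t) (h' : t ≤ 2/3) : rl t = 1 := by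
  rw [rl, min_eq_right (by linarith : (1:ℝ) ≤ 3*t), min_eq_left (by linarith),
    max_eq_right (by linarith)]
lemma cc_val3 {t : ℝ} (h : 2/3 ≤ t) : cc t = 3*t - 2 := max_eq_left (by linarith)
lemma ra_val3 {t : ℝ} (h : 2/3 ≤ t) (h' : t ≤ 1) : ra t = 3 - 3*t := by
  rw [ra, min_eq_right (by linarith), max_eq_right (by linarith)]
lemma rl_val3 {t : ℝ} (h : 2/3 ≤ t) (h' : t ≤ 1) : rl t = 3 - 3*t := by
  rw [rl, min_eq_right (by linarith : (1:ℝ) ≤ 3*t), min_eq_right (by linarith),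
    max_eq_right (by linarith)]

/-- The basic coefficient identity. -/
lemma coeff_id {t : ℝ} (h0 : 0 ≤ t) (h1 : t ≤ 1) (w : ℝ) :
    cb t + cc t + (ra t + rd t) * w + rl t * (1 - w) = 1 := by
  rcases le_or_gt t (1/3) with hA | hA
  · rw [cb_val1 hA, cc_eq_zero (by linarith), ra_eq_zero (Or.inl hA), rd_val1 h0 hA,
      rl_val1 h0 hA]; ring
  rcases le_or_gt t (2/3) with hB | hB
  · rw [cb_eq_zero (by linarith), cc_eq_zero hB, ra_val2 hA.le hB, rd_val2 hA.le hB,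
      rl_val2 hA.le hB]; ring
  · rw [cb_eq_zero (by linarith), cc_val3 hB.le, ra_val3 hB.le h1,
      rd_eq_zero (Or.inr hB.le), rl_val3 hB.le h1]; ring
end PCAux
namespace PCSetup
open PCAux
attribute [local instance] Classical.propDecidable
noncomputable instance (priority := 2000) instDecEqV {V : Type*} : DecidableEq V :=
  Classical.decEq V
noncomputable instance (priority := 2000) instDecEqSym2 {V : Type*} :
    DecidableEq (Sym2 V) := Classical.decEq _

variable {V : Type*} (S : PCSetup V)

abbrev RK := realization (matchingComplex S.G)
abbrev RL := realization (Multigraph.matchingComplex S.MG)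

variable {S}

section KPoints
variable (x : S.RK)

/-- The chosen face of a point of the realization. -/
noncomputable def face : Finset (Sym2 V) := x.2.2.choose

lemma face_mem : face x ∈ matchingComplex S.G := x.2.2.choose_spec.1
lemma supp_face : Function.support x.1 ⊆ ↑(face x) := x.2.2.choose_spec.2.1
lemma sum_face : ∑ e ∈ face x, x.1 e = 1 := x.2.2.choose_spec.2.2

lemma xnn (e : Sym2 V) : 0 ≤ x.1 e := x.2.1 e

lemma mem_face_of_ne {e : Sym2 V} (h : x.1 e ≠ 0) : e ∈ face x := supp_face x h

lemma edge_of_ne {e : Sym2 V} (h : x.1 e ≠ 0) : e ∈ S.G.edgeSet :=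
  (face_mem x).1 e (mem_face_of_ne x h)

/-- Two distinct edges sharing a vertex cannot both carry weight. -/
lemma conflict {e f : Sym2 V} (hef : e ≠ f) {v : V} (hv : v ∈ e) (hv' : v ∈ f) :
    x.1 e = 0 ∨ x.1 f = 0 := by
  by_contra h
  push_neg at h
  exact (face_mem x).2 e (mem_face_of_ne x h.1) f (mem_face_of_ne x h.2) hef v hv hv'

def al : ℝ := x.1 S.ea
def be : ℝ := x.1 S.eb
def ga : ℝ := x.1 S.ec
def de : ℝ := x.1 S.ed
def mm : ℝ := 1 - al x - be x - ga x - de x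
def mu : ℝ := min (al x) (de x)
def MM : ℝ := mu x + mm x
def pc : ℝ := 1/2 + al x + ga x - be x - de x
def TT : ℝ := clamp (pc x)

lemma al_nonneg : 0 ≤ al x := xnn x _
lemma be_nonneg : 0 ≤ be x := xnn x _
lemma ga_nonneg : 0 ≤ ga x := xnn x _
lemma de_nonneg : 0 ≤ de x := xnn x _
lemma mu_nonneg : 0 ≤ mu x := le_min (al_nonneg x) (de_nonneg x)

lemma albe : al x = 0 ∨ be x = 0 :=
  conflict x S.ea_ne_eb (S.mem_ea.mpr (Or.inr rfl)) (S.mem_eb.mpr (Or.inl rfl))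
lemma bega : be x = 0 ∨ ga x = 0 :=
  conflict x S.eb_ne_ec (S.mem_eb.mpr (Or.inr rfl)) (S.mem_ec.mpr (Or.inl rfl))
lemma gade : ga x = 0 ∨ de x = 0 :=
  conflict x S.ec_ne_ed (S.mem_ec.mpr (Or.inr rfl)) (S.mem_ed.mpr (Or.inl rfl))

/-- The path part of the chosen face. -/
noncomputable def pface : Finset (Sym2 V) :=
  (face x).filter (fun e => e = S.ea ∨ e = S.eb ∨ e = S.ec ∨ e = S.ed)
/-- The outside part of the chosen face. -/
noncomputable def oface : Finset (Sym2 V) :=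
  (face x).filter (fun e => ¬(e = S.ea ∨ e = S.eb ∨ e = S.ec ∨ e = S.ed))

lemma sum_pface : ∑ e ∈ pface x, x.1 e = al x + be x + ga x + de x := by
  have hsub : pface x ⊆ {S.ea, S.eb, S.ec, S.ed} := by
    intro e he
    rw [pface, Finset.mem_filter] at he
    simp only [Finset.mem_insert, Finset.mem_singleton]
    tauto
  rw [Finset.sum_subset hsub ?_]
  · rw [show ({S.ea, S.eb, S.ec, S.ed} : Finset (Sym2 V)) =
      insert S.ea (insert S.eb (insert S.ec ({S.ed} : Finset (Sym2 V)))) from rfl]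
    rw [Finset.sum_insert (by simp [S.ea_ne_eb, S.ea_ne_ec, S.ea_ne_ed]),
      Finset.sum_insert (by simp [S.eb_ne_ec, S.eb_ne_ed]),
      Finset.sum_insert (by simp [S.ec_ne_ed]), Finset.sum_singleton]
    rw [al, be, ga, de]; ring
  · intro e he hne
    by_contra h
    apply hne
    rw [pface, Finset.mem_filter]
    refine ⟨mem_face_of_ne x h, ?_⟩
    simp only [Finset.mem_insert, Finset.mem_singleton] at he
    tauto

lemma sum_oface : ∑ e ∈ oface x, x.1 e = mm x := by
  have h := Finset.sum_filter_add_sum_filter_not (face x)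
    (fun e => e = S.ea ∨ e = S.eb ∨ e = S.ec ∨ e = S.ed) x.1
  rw [sum_face x] at h
  have h2 : ∑ e ∈ pface x, x.1 e + ∑ e ∈ oface x, x.1 e = 1 := h
  rw [sum_pface x] at h2
  rw [mm]; linarith

lemma mm_nonneg : 0 ≤ mm x := by
  rw [← sum_oface x]
  exact Finset.sum_nonneg (fun e _ => xnn x e)

lemma MM_nonneg : 0 ≤ MM x := add_nonneg (mu_nonneg x) (mm_nonneg x)

lemma xO_le_mm {e : Sym2 V} (h : ¬(e = S.ea ∨ e = S.eb ∨ e = S.ec ∨ e = S.ed)) :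
    x.1 e ≤ mm x := by
  rcases eq_or_ne (x.1 e) 0 with h0 | h0
  · rw [h0]; exact mm_nonneg x
  · rw [← sum_oface x]
    refine Finset.single_le_sum (fun f _ => xnn x f) ?_
    rw [oface, Finset.mem_filter]
    exact ⟨mem_face_of_ne x h0, h⟩

lemma mm_le_MM : mm x ≤ MM x := le_add_of_nonneg_left (mu_nonneg x)
lemma mu_le_MM : mu x ≤ MM x := le_add_of_nonneg_right (mm_nonneg x)

lemma TT_nonneg : 0 ≤ TT x := clamp_nonneg _
lemma TT_le_one : TT x ≤ 1 := clamp_le_one _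

/-- If the reduced mass vanishes then the point lies over a cone point. -/
lemma M0_pc (hM : MM x = 0) : pc x = -(1/2) ∨ pc x = 3/2 := by
  have hmu : mu x = 0 := le_antisymm (by rw [← hM]; exact mu_le_MM x) (mu_nonneg x)
  have hmm : mm x = 0 := le_antisymm (by rw [← hM]; exact mm_le_MM x) (mm_nonneg x)
  have hsum : al x + be x + ga x + de x = 1 := by rw [mm] at hmm; linarith
  have hmu' : al x = 0 ∨ de x = 0 := by
    rcases le_or_gt (al x) (de x) with h | h
    · left; rw [mu, min_eq_left h] at hmu; exact hmu
    · right; rw [mu, min_eq_right h.le] at hmu; exact hmu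
  rcases hmu' with h | h
  · rcases eq_or_ne (ga x) 0 with hg | hg
    · left; rw [pc, h, hg]; linarith
    · have hb : be x = 0 := (bega x).resolve_right hg
      have hd : de x = 0 := (gade x).resolve_left hg
      right; rw [pc, h, hb, hd]; rw [h, hb, hd] at hsum; linarith
  · rcases eq_or_ne (be x) 0 with hb | hb
    · right; rw [pc, h, hb]; linarith
    · have ha : al x = 0 := (albe x).resolve_right hb
      have hg : ga x = 0 := (bega x).resolve_left hb
      left; rw [pc, ha, hg, h]; rw [ha, hg, h] at hsum; linarith

lemma M0_TT (hM : MM x = 0) : TT x = 0 ∨ TT x = 1 := by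
  rcases M0_pc x hM with h | h
  · left; rw [TT, h]; exact clamp_of_nonpos (by norm_num)
  · right; rw [TT, h]; exact clamp_of_one_le (by norm_num)

end KPoints
end PCSetup
namespace PCSetup
open PCAux
attribute [local instance] Classical.propDecidable

variable {V : Type*} {S : PCSetup V}

/-- The property defining edges of the contracted multigraph other than the new edge. -/
@[reducible] def OP (S : PCSetup V) (e : Sym2 V) : Prop :=
  e ∈ S.G.edgeSet ∧
    e ∉ ({s(S.v0, S.v1), s(S.v1, S.v2), s(S.v2, S.v3), s(S.v3, S.v4)} : Set (Sym2 V))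

noncomputable instance (priority := 2000) instDecEqOE {V : Type*} {S : PCSetup V} :
    DecidableEq (Option {e : Sym2 V // OP S e}) := Classical.decEq _

lemma OP.ne_ea {e : Sym2 V} (h : OP S e) : e ≠ S.ea := by
  intro he; apply h.2; rw [he, ea]; exact Set.mem_insert _ _
lemma OP.ne_eb {e : Sym2 V} (h : OP S e) : e ≠ S.eb := by
  intro he; apply h.2; rw [he, eb]; right; exact Set.mem_insert _ _
lemma OP.ne_ec {e : Sym2 V} (h : OP S e) : e ≠ S.ec := by
  intro he; apply h.2; rw [he, ec]; right; right; exact Set.mem_insert _ _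
lemma OP.ne_ed {e : Sym2 V} (h : OP S e) : e ≠ S.ed := by
  intro he; apply h.2; rw [he, ed]; right; right; right; rfl

lemma OP.not_path {e : Sym2 V} (h : OP S e) :
    ¬(e = S.ea ∨ e = S.eb ∨ e = S.ec ∨ e = S.ed) := by
  rintro (h' | h' | h' | h')
  exacts [h.ne_ea h', h.ne_eb h', h.ne_ec h', h.ne_ed h']

lemma op_of_not_path {e : Sym2 V} (he : e ∈ S.G.edgeSet)
    (h : ¬(e = S.ea ∨ e = S.eb ∨ e = S.ec ∨ e = S.ed)) : OP S e := by
  refine ⟨he, ?_⟩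
  intro hmem
  simp only [Set.mem_insert_iff, Set.mem_singleton_iff] at hmem
  rcases hmem with h' | h' | h' | h'
  · exact h (Or.inl h')
  · exact h (Or.inr (Or.inl h'))
  · exact h (Or.inr (Or.inr (Or.inl h')))
  · exact h (Or.inr (Or.inr (Or.inr h')))

lemma OP.not_v1 {e : Sym2 V} (h : OP S e) : S.v1 ∉ e := by
  intro hv
  rcases S.edge_v1 h.1 hv with h' | h'
  exacts [h.ne_ea h', h.ne_eb h']
lemma OP.not_v2 {e : Sym2 V} (h : OP S e) : S.v2 ∉ e := by
  intro hv
  rcases S.edge_v2 h.1 hv with h' | h'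
  exacts [h.ne_eb h', h.ne_ec h']
lemma OP.not_v3 {e : Sym2 V} (h : OP S e) : S.v3 ∉ e := by
  intro hv
  rcases S.edge_v3 h.1 hv with h' | h'
  exacts [h.ne_ec h', h.ne_ed h']

section LPoints
variable (h : S.RL)

lemma ends_some (e : {e : Sym2 V // OP S e}) :
    S.MG.ends (some e) = e.1 := rfl
lemma ends_none : S.MG.ends (none : Option {e : Sym2 V // OP S e}) = s(S.v0, S.v4) := rfl

noncomputable def faceL : Finset S.MG.E := h.2.2.choose

lemma faceL_mem : faceL h ∈ Multigraph.matchingComplex S.MG := h.2.2.choose_spec.1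
lemma supp_faceL : Function.support h.1 ⊆ ↑(faceL h) := h.2.2.choose_spec.2.1
lemma sum_faceL : ∑ o ∈ faceL h, h.1 o = 1 := h.2.2.choose_spec.2.2

lemma hnn (o : S.MG.E) : 0 ≤ h.1 o := h.2.1 o

/-- weight of the contracted edge -/
def ww : ℝ := h.1 (none : Option {e : Sym2 V // OP S e})

lemma ww_nonneg : 0 ≤ ww h := hnn h _

lemma mem_faceL_of_ne {o : S.MG.E} (ho : h.1 o ≠ 0) : o ∈ faceL h := supp_faceL h ho

lemma matchL {i j : S.MG.E} (hi : i ∈ faceL h) (hj : j ∈ faceL h) (hij : i ≠ j)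
    {v : V} (hv : v ∈ S.MG.ends i) : v ∉ S.MG.ends j :=
  (faceL_mem h) i hi j hj hij v hv

/-- If the contracted edge has weight, outside edges in the face avoid `v0` and `v4`. -/
lemma ww_avoid {o : {e : Sym2 V // OP S e}} (hw : ww h ≠ 0)
    (ho : some o ∈ faceL h) : S.v0 ∉ o.1 ∧ S.v4 ∉ o.1 := by
  have hn : (none : Option {e : Sym2 V // OP S e}) ∈ faceL h := mem_faceL_of_ne h hw
  constructor
  · exact matchL h hn ho (by simp) (by rw [ends_none]; exact Sym2.mem_iff.mpr (Or.inl rfl))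
  · exact matchL h hn ho (by simp) (by rw [ends_none]; exact Sym2.mem_iff.mpr (Or.inr rfl))

lemma sum_faceL_some : ∑ o ∈ (faceL h).erase none, h.1 o = 1 - ww h := by
  rcases eq_or_ne (ww h) 0 with hw | hw
  · by_cases hn : (none : Option {e : Sym2 V // OP S e}) ∈ faceL h
    · have := Finset.sum_erase_add (faceL h) h.1 hn
      rw [sum_faceL h] at this
      have hwn : h.1 none = 0 := hw
      rw [hwn] at this; rw [hw]; linarith
    · rw [show (faceL h).erase none = faceL h from Finset.erase_eq_of_notMem hn,
        sum_faceL h, hw]; ring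
  · have hn : (none : Option {e : Sym2 V // OP S e}) ∈ faceL h := mem_faceL_of_ne h hw
    have := Finset.sum_erase_add (faceL h) h.1 hn
    rw [sum_faceL h] at this
    have : ∑ o ∈ (faceL h).erase none, h.1 o + ww h = 1 := this
    linarith

end LPoints
end PCSetup
namespace PCSetup
open PCAux
attribute [local instance] Classical.propDecidable

variable {V : Type*} {S : PCSetup V}


lemma disj_ac : ∀ v : V, v ∈ S.ea → v ∉ S.ec := by
  rintro v hva hvc
  rcases S.mem_ea.mp hva with rfl | rfl <;> rcases S.mem_ec.mp hvc with h | h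
  exacts [S.ne02 h, S.ne03 h, S.ne12 h, S.ne13 h]
lemma disj_ad : ∀ v : V, v ∈ S.ea → v ∉ S.ed := by
  rintro v hva hvd
  rcases S.mem_ea.mp hva with rfl | rfl <;> rcases S.mem_ed.mp hvd with h | h
  exacts [S.ne03 h, S.ne04 h, S.ne13 h, S.ne14 h]
lemma disj_bd : ∀ v : V, v ∈ S.eb → v ∉ S.ed := by
  rintro v hvb hvd
  rcases S.mem_eb.mp hvb with rfl | rfl <;> rcases S.mem_ed.mp hvd with h | h
  exacts [S.ne13 h, S.ne14 h, S.ne23 h, S.ne24 h]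

/-- Outside-edge evaluation of a realization point of the contracted complex. -/
noncomputable def oval (h : S.RL) (e : Sym2 V) : ℝ :=
  if hp : OP S e then h.1 (some ⟨e, hp⟩) else 0

lemma oval_nonneg (h : S.RL) (e : Sym2 V) : 0 ≤ oval h e := by
  rw [oval]; split
  · exact hnn h _
  · exact le_refl 0

/-- The underlying weight function of the map `ψ`. -/
noncomputable def psi0 (h : S.RL) (t : ℝ) : Sym2 V → ℝ := fun e =>
  if e = S.eb then cb t else if e = S.ec then cc t
  else if e = S.ea then ra t * ww h
  else if e = S.ed then rd t * ww h
  else rl t * oval h e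

lemma psi0_eb (h : S.RL) (t : ℝ) : psi0 h t S.eb = cb t := if_pos rfl
lemma psi0_ec (h : S.RL) (t : ℝ) : psi0 h t S.ec = cc t := by
  rw [psi0, if_neg S.eb_ne_ec.symm, if_pos rfl]
lemma psi0_ea (h : S.RL) (t : ℝ) : psi0 h t S.ea = ra t * ww h := by
  rw [psi0, if_neg S.ea_ne_eb, if_neg S.ea_ne_ec, if_pos rfl]
lemma psi0_ed (h : S.RL) (t : ℝ) : psi0 h t S.ed = rd t * ww h := by
  rw [psi0, if_neg S.eb_ne_ed.symm, if_neg S.ec_ne_ed.symm, if_neg S.ea_ne_ed.symm, if_pos rfl]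
lemma psi0_else (h : S.RL) (t : ℝ) {e : Sym2 V}
    (hne : ¬(e = S.ea ∨ e = S.eb ∨ e = S.ec ∨ e = S.ed)) :
    psi0 h t e = rl t * oval h e := by
  push_neg at hne
  rw [psi0, if_neg hne.2.1, if_neg hne.2.2.1, if_neg hne.1, if_neg hne.2.2.2]

lemma psi0_op (h : S.RL) (t : ℝ) {e : Sym2 V} (hp : OP S e) :
    psi0 h t e = rl t * h.1 (some ⟨e, hp⟩) := by
  rw [psi0_else h t hp.not_path, oval, dif_pos hp]

lemma psi0_nonneg (h : S.RL) {t : ℝ} (h0 : 0 ≤ t) (e : Sym2 V) : 0 ≤ psi0 h t e := by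
  rw [psi0]
  split
  · exact cb_nonneg t
  split
  · exact cc_nonneg t
  split
  · exact mul_nonneg (ra_nonneg t) (ww_nonneg h)
  split
  · exact mul_nonneg (rd_nonneg t) (ww_nonneg h)
  · exact mul_nonneg (rl_nonneg t) (oval_nonneg h _)

/-- The projection from multigraph edges to `Sym2 V`. -/
def eproj : Option {e : Sym2 V // OP S e} → Sym2 V := fun o => o.elim S.ea Subtype.val

/-- The face witnessing that `psi0` lands in the realization. -/
noncomputable def psiface (h : S.RL) (t : ℝ) : Finset (Sym2 V) :=
  ((faceL h).erase none).image eproj ∪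
    ({S.ea, S.eb, S.ec, S.ed} : Finset (Sym2 V)).filter (fun e => psi0 h t e ≠ 0)

lemma mem_image_part {h : S.RL} {f : Sym2 V}
    (hf : f ∈ ((faceL h).erase none).image (eproj (S := S))) :
    ∃ hp : OP S f, some (⟨f, hp⟩ : {e : Sym2 V // OP S e}) ∈ faceL h := by
  rw [Finset.mem_image] at hf
  obtain ⟨o, ho, rfl⟩ := hf
  rw [Finset.mem_erase] at ho
  obtain ⟨e, rfl⟩ := Option.ne_none_iff_exists'.mp ho.1
  exact ⟨e.2, ho.2⟩

lemma sum_four (g : Sym2 V → ℝ) :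
    ∑ e ∈ ({S.ea, S.eb, S.ec, S.ed} : Finset (Sym2 V)), g e
      = g S.ea + g S.eb + g S.ec + g S.ed := by
  rw [show ({S.ea, S.eb, S.ec, S.ed} : Finset (Sym2 V)) =
      insert S.ea (insert S.eb (insert S.ec ({S.ed} : Finset (Sym2 V)))) from rfl]
  rw [Finset.sum_insert (by simp [S.ea_ne_eb, S.ea_ne_ec, S.ea_ne_ed]),
    Finset.sum_insert (by simp [S.eb_ne_ec, S.eb_ne_ed]),
    Finset.sum_insert (by simp [S.ec_ne_ed]), Finset.sum_singleton]
  ring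

lemma psi0_mem (h : S.RL) {t : ℝ} (h0 : 0 ≤ t) (h1 : t ≤ 1) :
    (∀ e, 0 ≤ psi0 h t e) ∧ ∃ s_ ∈ matchingComplex S.G,
      Function.support (psi0 h t) ⊆ ↑s_ ∧ ∑ e ∈ s_, psi0 h t e = 1 := by
  have hab : ¬(psi0 h t S.ea ≠ 0 ∧ psi0 h t S.eb ≠ 0) := by
    rintro ⟨ha, hb⟩
    rw [psi0_ea] at ha; rw [psi0_eb] at hb
    have h1 : 0 < ra t := lt_of_le_of_ne (ra_nonneg t)
      (fun hc => ha (by rw [← hc, zero_mul]))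
    have h2 : 0 < cb t := lt_of_le_of_ne (cb_nonneg t) (Ne.symm hb)
    have := (ra_pos h1).1; have := cb_pos h2; linarith
  have hbc : ¬(psi0 h t S.eb ≠ 0 ∧ psi0 h t S.ec ≠ 0) := by
    rintro ⟨hb, hc⟩
    rw [psi0_eb] at hb; rw [psi0_ec] at hc
    have h1 : 0 < cb t := lt_of_le_of_ne (cb_nonneg t) (Ne.symm hb)
    have h2 : 0 < cc t := lt_of_le_of_ne (cc_nonneg t) (Ne.symm hc)
    have := cb_pos h1; have := cc_pos h2; linarith
  have hcd : ¬(psi0 h t S.ec ≠ 0 ∧ psi0 h t S.ed ≠ 0) := by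
    rintro ⟨hc, hd⟩
    rw [psi0_ec] at hc; rw [psi0_ed] at hd
    have h1 : 0 < cc t := lt_of_le_of_ne (cc_nonneg t) (Ne.symm hc)
    have h2 : 0 < rd t := lt_of_le_of_ne (rd_nonneg t)
      (fun hcc => hd (by rw [← hcc, zero_mul]))
    have := cc_pos h1; have := (rd_pos h2).2; linarith
  refine ⟨psi0_nonneg h h0, psiface h t, ⟨?_, ?_⟩, ?_, ?_⟩
  · -- edges belong to G
    intro e he
    rw [psiface, Finset.mem_union] at he
    rcases he with he | he
    · exact (mem_image_part he).choose.1
    · rw [Finset.mem_filter] at he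
      have := he.1
      simp only [Finset.mem_insert, Finset.mem_singleton] at this
      rcases this with rfl | rfl | rfl | rfl
      exacts [S.ea_edge, S.eb_edge, S.ec_edge, S.ed_edge]
  · -- pairwise disjointness
    have key : ∀ q ∈ ({S.ea, S.eb, S.ec, S.ed} : Finset (Sym2 V)), psi0 h t q ≠ 0 →
        ∀ f ∈ ((faceL h).erase none).image (eproj (S := S)),
        ∀ v ∈ q, v ∉ f := by
      intro q hq hq0 f hf v hv
      obtain ⟨hp, hmem⟩ := mem_image_part hf
      simp only [Finset.mem_insert, Finset.mem_singleton] at hq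
      rcases hq with rfl | rfl | rfl | rfl
      · rw [psi0_ea] at hq0
        have hw : ww h ≠ 0 := fun hw => hq0 (by rw [hw, mul_zero])
        rcases S.mem_ea.mp hv with rfl | rfl
        · exact (ww_avoid h hw hmem).1
        · exact hp.not_v1
      · rcases S.mem_eb.mp hv with rfl | rfl
        · exact hp.not_v1
        · exact hp.not_v2
      · rcases S.mem_ec.mp hv with rfl | rfl
        · exact hp.not_v2
        · exact hp.not_v3
      · rw [psi0_ed] at hq0
        have hw : ww h ≠ 0 := fun hw => hq0 (by rw [hw, mul_zero])
        rcases S.mem_ed.mp hv with rfl | rfl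
        · exact hp.not_v3
        · exact (ww_avoid h hw hmem).2
    intro e he f hf hef v hv
    rw [psiface, Finset.mem_union] at he hf
    rcases he with he | he <;> rcases hf with hf | hf
    · obtain ⟨hpe, hme⟩ := mem_image_part he
      obtain ⟨hpf, hmf⟩ := mem_image_part hf
      have hne : (some (⟨e, hpe⟩ : {e : Sym2 V // OP S e})) ≠ some ⟨f, hpf⟩ := by
        intro hc
        exact hef (congrArg (eproj (S := S)) hc)
      exact matchL h hme hmf hne (v := v) hv
    · rw [Finset.mem_filter] at hf
      intro hvf
      exact key f hf.1 hf.2 e he v hvf hv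
    · rw [Finset.mem_filter] at he
      exact key e he.1 he.2 f hf v hv
    · rw [Finset.mem_filter] at he hf
      have he4 := he.1; have hf4 := hf.1
      simp only [Finset.mem_insert, Finset.mem_singleton] at he4 hf4
      rcases he4 with rfl | rfl | rfl | rfl <;> rcases hf4 with rfl | rfl | rfl | rfl
      · exact absurd rfl hef
      · exact absurd ⟨he.2, hf.2⟩ hab
      · exact disj_ac v hv
      · exact disj_ad v hv
      · exact absurd ⟨hf.2, he.2⟩ hab
      · exact absurd rfl hef
      · exact absurd ⟨he.2, hf.2⟩ hbc
      · exact disj_bd v hv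
      · exact fun hva => disj_ac v hva hv
      · exact absurd ⟨hf.2, he.2⟩ hbc
      · exact absurd rfl hef
      · exact absurd ⟨he.2, hf.2⟩ hcd
      · exact fun hva => disj_ad v hva hv
      · exact fun hvb => disj_bd v hvb hv
      · exact absurd ⟨hf.2, he.2⟩ hcd
      · exact absurd rfl hef
  · -- support
    intro e he
    rw [Function.mem_support] at he
    rw [psiface, Finset.coe_union, Set.mem_union]
    by_cases hp : e = S.ea ∨ e = S.eb ∨ e = S.ec ∨ e = S.ed
    · right
      rw [Finset.coe_filter]
      refine ⟨?_, he⟩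
      simp only [Finset.mem_insert, Finset.mem_singleton]
      exact hp
    · left
      rw [psi0_else h t hp] at he
      have ho : oval h e ≠ 0 := fun hc => he (by rw [hc, mul_zero])
      rw [oval] at ho
      split at ho
      · rename_i hop
        have hm : some (⟨e, hop⟩ : {e : Sym2 V // OP S e}) ∈ faceL h :=
          mem_faceL_of_ne h ho
        rw [Finset.coe_image]
        refine ⟨some ⟨e, hop⟩, ?_, rfl⟩
        rw [Finset.coe_erase]
        exact ⟨hm, by simp⟩
      · exact absurd rfl ho
  · -- sum
    have hdisj : Disjoint (((faceL h).erase none).image (eproj (S := S)))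
        (({S.ea, S.eb, S.ec, S.ed} : Finset (Sym2 V)).filter (fun e => psi0 h t e ≠ 0)) := by
      rw [Finset.disjoint_left]
      intro e hei hef
      obtain ⟨hp, _⟩ := mem_image_part hei
      rw [Finset.mem_filter] at hef
      have := hef.1
      simp only [Finset.mem_insert, Finset.mem_singleton] at this
      exact hp.not_path this
    rw [psiface, Finset.sum_union hdisj]
    have hinj : ∀ o ∈ (faceL h).erase none, ∀ o' ∈ (faceL h).erase none,
        eproj (S := S) o = eproj o' → o = o' := by
      intro o ho o' ho' hoo
      rw [Finset.mem_erase] at ho ho'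
      obtain ⟨e, rfl⟩ := Option.ne_none_iff_exists'.mp ho.1
      obtain ⟨e', rfl⟩ := Option.ne_none_iff_exists'.mp ho'.1
      have : e.1 = e'.1 := hoo
      exact congrArg some (Subtype.ext this)
    have hterm : ∀ o ∈ (faceL h).erase none, psi0 h t (eproj o) = rl t * h.1 o := by
      intro o ho
      rw [Finset.mem_erase] at ho
      obtain ⟨e, rfl⟩ := Option.ne_none_iff_exists'.mp ho.1
      rw [show eproj (S := S) (some e) = e.1 from rfl, psi0_op h t e.2]
    have hs1 : ∑ e ∈ ((faceL h).erase none).image (eproj (S := S)), psi0 h t e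
        = rl t * (1 - ww h) := by
      rw [Finset.sum_image hinj]
      refine (Finset.sum_congr rfl hterm).trans ?_
      rw [← Finset.mul_sum, sum_faceL_some h]
    have hs2 : ∑ e ∈ ({S.ea, S.eb, S.ec, S.ed} : Finset (Sym2 V)).filter
        (fun e => psi0 h t e ≠ 0), psi0 h t e
        = ra t * ww h + cb t + cc t + rd t * ww h := by
      rw [Finset.sum_filter_of_ne (fun e _ hne => hne)]
      rw [sum_four]
      try rw [psi0_ea, psi0_eb, psi0_ec, psi0_ed]
      try ring
    rw [hs1, hs2]
    have := coeff_id h0 h1 (ww h)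
    linarith
end PCSetup
namespace PCAux
lemma cb_at0 : cb 0 = 1 := by norm_num [cb]
lemma cc_at0 : cc 0 = 0 := by norm_num [cc]
lemma ra_at0 : ra 0 = 0 := by norm_num [ra]
lemma rd_at0 : rd 0 = 0 := by norm_num [rd]
lemma rl_at0 : rl 0 = 0 := by norm_num [rl]
lemma cb_at1 : cb 1 = 0 := by norm_num [cb]
lemma cc_at1 : cc 1 = 1 := by norm_num [cc]
lemma ra_at1 : ra 1 = 0 := by norm_num [ra]
lemma rd_at1 : rd 1 = 0 := by norm_num [rd]
lemma rl_at1 : rl 1 = 0 := by norm_num [rl]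
end PCAux

namespace PCSetup
open PCAux
attribute [local instance] Classical.propDecidable

variable {V : Type*} {S : PCSetup V}

/-- The vertex `δ_b` of the realization. -/
noncomputable def deltaB (S : PCSetup V) : S.RK := by
  refine ⟨fun e => if e = S.eb then (1:ℝ) else 0, ?_, {S.eb}, ⟨?_, ?_⟩, ?_, ?_⟩
  · intro e; dsimp only; split <;> norm_num
  · intro e he; rw [Finset.mem_singleton] at he; rw [he]; exact S.eb_edge
  · intro e he f hf hef
    rw [Finset.mem_singleton] at he hf
    exact absurd (he.trans hf.symm) hef
  · intro e he
    rw [Function.mem_support] at he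
    rw [Finset.coe_singleton, Set.mem_singleton_iff]
    by_contra hne
    exact he (if_neg hne)
  · rw [Finset.sum_singleton, if_pos rfl]

/-- The vertex `δ_c` of the realization. -/
noncomputable def deltaC (S : PCSetup V) : S.RK := by
  refine ⟨fun e => if e = S.ec then (1:ℝ) else 0, ?_, {S.ec}, ⟨?_, ?_⟩, ?_, ?_⟩
  · intro e; dsimp only; split <;> norm_num
  · intro e he; rw [Finset.mem_singleton] at he; rw [he]; exact S.ec_edge
  · intro e he f hf hef
    rw [Finset.mem_singleton] at he hf
    exact absurd (he.trans hf.symm) hef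
  · intro e he
    rw [Function.mem_support] at he
    rw [Finset.coe_singleton, Set.mem_singleton_iff]
    by_contra hne
    exact he (if_neg hne)
  · rw [Finset.sum_singleton, if_pos rfl]

lemma psi0_zero (h : S.RL) : psi0 h 0 = (deltaB S).1 := by
  funext e
  show psi0 h 0 e = if e = S.eb then (1:ℝ) else 0
  rw [psi0]
  split_ifs with h1 h2 h3 h4
  · exact cb_at0
  · rw [cc_at0]
  · rw [ra_at0, zero_mul]
  · rw [rd_at0, zero_mul]
  · rw [rl_at0, zero_mul]

lemma psi0_one (h : S.RL) : psi0 h 1 = (deltaC S).1 := by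
  funext e
  show psi0 h 1 e = if e = S.ec then (1:ℝ) else 0
  rw [psi0]
  by_cases h1 : e = S.eb
  · rw [if_pos h1, if_neg (h1 ▸ S.eb_ne_ec : ¬ e = S.ec), cb_at1]
  rw [if_neg h1]
  split_ifs with h2 h3 h4
  · exact cc_at1
  · rw [ra_at1, zero_mul]
  · rw [rd_at1, zero_mul]
  · rw [rl_at1, zero_mul]

/-- `ψ` on the cylinder. -/
noncomputable def psiK (h : S.RL) (t : ℝ) (h0 : 0 ≤ t) (h1 : t ≤ 1) : S.RK :=
  ⟨psi0 h t, psi0_mem h h0 h1⟩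

/-- `ψ` on the sum type. -/
noncomputable def psiSum : (S.RL × Set.Icc (0:ℝ) 1) ⊕ Bool → S.RK :=
  Sum.elim (fun p => psiK p.1 p.2.1 p.2.2.1 p.2.2.2)
    (fun b => match b with
      | false => deltaB S
      | true => deltaC S)

/-- `ψ` as a map from the suspension. -/
noncomputable def psiQ : Susp S.RL → S.RK :=
  Quot.lift psiSum (by
    rintro (⟨h, t⟩ | b) (⟨h', t'⟩ | b') hrel
    · exact absurd hrel not_false
    · rcases hrel with ⟨ht, rfl⟩ | ⟨ht, rfl⟩
      · apply Subtype.ext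
        show psi0 h t.1 = _
        rw [ht, psi0_zero]
        rfl
      · apply Subtype.ext
        show psi0 h t.1 = _
        rw [ht, psi0_one]
        rfl
    · exact absurd hrel not_false
    · exact absurd hrel not_false)

lemma mu_ne {x : S.RK} (hmu : mu x ≠ 0) : al x ≠ 0 ∧ de x ≠ 0 := by
  constructor
  · intro h0
    exact hmu (by rw [mu, h0, min_eq_left (de_nonneg x)])
  · intro h0
    exact hmu (by rw [mu, h0, min_eq_right (al_nonneg x)])

lemma op_of_oface {x : S.RK} {e : Sym2 V} (he : e ∈ oface x) : OP S e := by
  rw [oface, Finset.mem_filter] at he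
  exact op_of_not_path ((face_mem x).1 e he.1) he.2

/-- Outside edges of the face avoid `v0` when `a` carries weight. -/
lemma oface_avoid_v0 {x : S.RK} (ha : al x ≠ 0) {e : Sym2 V} (he : e ∈ oface x) :
    S.v0 ∉ e := by
  have hea : S.ea ∈ face x := mem_face_of_ne x ha
  have heo : e ∈ face x := (Finset.mem_filter.mp he).1
  have hne : S.ea ≠ e := fun hc => (op_of_oface he).ne_ea hc.symm
  exact (face_mem x).2 S.ea hea e heo hne S.v0 (S.mem_ea.mpr (Or.inl rfl))

lemma oface_avoid_v4 {x : S.RK} (hd : de x ≠ 0) {e : Sym2 V} (he : e ∈ oface x) :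
    S.v4 ∉ e := by
  have hed : S.ed ∈ face x := mem_face_of_ne x hd
  have heo : e ∈ face x := (Finset.mem_filter.mp he).1
  have hne : S.ed ≠ e := fun hc => (op_of_oface he).ne_ed hc.symm
  exact (face_mem x).2 S.ed hed e heo hne S.v4 (S.mem_ed.mpr (Or.inr rfl))

/-- The weight function of `φ` in the cylinder region. -/
noncomputable def hmapfun (x : S.RK) : S.MG.E → ℝ := fun o =>
  Option.elim o (mu x / MM x) (fun e => x.1 e.1 / MM x)

/-- The witnessing face on the contracted side. -/
noncomputable def faceLx (x : S.RK) : Finset (Option {e : Sym2 V // OP S e}) :=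
  ((oface x).attach.image
    (fun e => (some ⟨e.1, op_of_oface e.2⟩ : Option {e : Sym2 V // OP S e}))) ∪
    (if mu x = 0 then ∅ else {none})

lemma mem_faceLx {x : S.RK} {o : Option {e : Sym2 V // OP S e}} (ho : o ∈ faceLx x) :
    (∃ e : {e : Sym2 V // OP S e}, o = some e ∧ e.1 ∈ oface x) ∨ (o = none ∧ mu x ≠ 0) := by
  rw [faceLx, Finset.mem_union] at ho
  rcases ho with ho | ho
  · rw [Finset.mem_image] at ho
    obtain ⟨e, he, rfl⟩ := ho
    exact Or.inl ⟨_, rfl, e.2⟩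
  · split at ho
    · exact absurd ho (Finset.notMem_empty _)
    · rw [Finset.mem_singleton] at ho
      rename_i hmu
      exact Or.inr ⟨ho, hmu⟩

lemma hmap_mem (x : S.RK) (hM : 0 < MM x) :
    (∀ o, 0 ≤ hmapfun x o) ∧ ∃ s_ ∈ Multigraph.matchingComplex S.MG,
      Function.support (hmapfun x) ⊆ ↑s_ ∧ ∑ o ∈ s_, hmapfun x o = 1 := by
  refine ⟨?_, faceLx x, ?_, ?_, ?_⟩
  · intro o
    rcases o with _ | e
    · exact div_nonneg (mu_nonneg x) (MM_nonneg x)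
    · exact div_nonneg (xnn x _) (MM_nonneg x)
  · -- matching
    intro i hi j hj hij v hv
    rcases mem_faceLx hi with ⟨e, rfl, he⟩ | ⟨rfl, hmu⟩ <;>
      rcases mem_faceLx hj with ⟨f, rfl, hf⟩ | ⟨rfl, hmu'⟩
    · have hne : e.1 ≠ f.1 := fun hc => hij (congrArg some (Subtype.ext hc))
      exact (face_mem x).2 e.1 (Finset.mem_filter.mp he).1 f.1 (Finset.mem_filter.mp hf).1
        hne v hv
    · intro hvn
      rw [ends_none] at hvn
      rcases Sym2.mem_iff.mp hvn with rfl | rfl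
      · exact oface_avoid_v0 (mu_ne hmu').1 he hv
      · exact oface_avoid_v4 (mu_ne hmu').2 he hv
    · rw [ends_none] at hv
      intro hvf
      rcases Sym2.mem_iff.mp hv with rfl | rfl
      · exact oface_avoid_v0 (mu_ne hmu).1 hf hvf
      · exact oface_avoid_v4 (mu_ne hmu).2 hf hvf
    · exact absurd rfl hij
  · -- support
    intro o ho
    rw [Function.mem_support] at ho
    rcases o with _ | e
    · have hmu : mu x ≠ 0 := by
        intro hc
        exact ho (by show mu x / MM x = 0; rw [hc, zero_div])
      rw [faceLx]
      rw [Finset.coe_union, Set.mem_union]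
      right
      rw [if_neg hmu]
      simp
    · have hx : x.1 e.1 ≠ 0 := by
        intro hc
        exact ho (by show x.1 e.1 / MM x = 0; rw [hc, zero_div])
      have hof : e.1 ∈ oface x := by
        rw [oface, Finset.mem_filter]
        exact ⟨mem_face_of_ne x hx, OP.not_path e.2⟩
      rw [faceLx, Finset.coe_union, Set.mem_union]
      left
      rw [Finset.coe_image]
      exact ⟨⟨e.1, hof⟩, by simp, congrArg some (Subtype.ext rfl)⟩
  · -- sum
    rw [faceLx]
    set A := ((oface x).attach.image
      (fun e => (some ⟨e.1, op_of_oface e.2⟩ : Option {e : Sym2 V // OP S e}))) with hA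
    set B := (if mu x = 0 then (∅ : Finset (Option {e : Sym2 V // OP S e})) else {none})
      with hB
    have hdisj : Disjoint A B := by
      rw [Finset.disjoint_right, hB]
      intro o ho
      split at ho
      · exact absurd ho (Finset.notMem_empty _)
      · rw [Finset.mem_singleton] at ho
        subst ho
        rw [hA, Finset.mem_image]
        rintro ⟨e, _, hc⟩
        exact Option.some_ne_none _ hc
    rw [Finset.sum_union (f := hmapfun x) hdisj]
    have hs1 : ∑ o ∈ A, hmapfun x o = mm x / MM x := by
      rw [hA]
      rw [Finset.sum_image (by
        intro e _ e' _ hee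
        have : e.1 = e'.1 := congrArg (fun o => Option.elim o S.ea Subtype.val) hee
        exact Subtype.ext this)]
      have hterm : ∀ e ∈ (oface x).attach, hmapfun x (some ⟨e.1, op_of_oface e.2⟩)
          = x.1 e.1 / MM x := fun e _ => rfl
      refine (Finset.sum_congr rfl hterm).trans ?_
      rw [Finset.sum_attach (oface x) (fun e => x.1 e / MM x)]
      rw [← Finset.sum_div, sum_oface]
    have hs2 : ∑ o ∈ B, hmapfun x o = mu x / MM x := by
      rw [hB]
      split
      · rename_i hmu
        rw [Finset.sum_empty, hmu, zero_div]
      · rw [Finset.sum_singleton]; rfl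
    refine Eq.trans (congrArg₂ (· + ·) hs1 hs2) ?_
    show mm x / MM x + mu x / MM x = 1
    rw [← add_div]
    rw [div_eq_one_iff_eq (ne_of_gt hM)]
    rw [MM]; ring

/-- The suspension coordinate of `φ`. -/
noncomputable def TIcc (x : S.RK) : Set.Icc (0:ℝ) 1 := ⟨TT x, TT_nonneg x, TT_le_one x⟩

/-- The `φ` part of the realization in the cylinder region. -/
noncomputable def hmapR (x : S.RK) (hM : 0 < MM x) : S.RL := ⟨hmapfun x, hmap_mem x hM⟩

/-- A reducible identity on the suspension, fixing the type of its argument. -/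
@[reducible] def suspId {X : Type*} [TopologicalSpace X] (z : Susp X) : Susp X := z

/-- The map `φ`. -/
noncomputable def phi (x : S.RK) : Susp S.RL :=
  if hM : 0 < MM x then suspId (Quot.mk _ (Sum.inl (hmapR x hM, TIcc x)))
  else if pc x ≤ 0 then suspId (Quot.mk _ (Sum.inr false))
  else suspId (Quot.mk _ (Sum.inr true))

end PCSetup
namespace PCAux
lemma le_clamp' {u r : ℝ} (hu : 0 ≤ u) (hu1 : u ≤ 1) (h : u ≤ r) : u ≤ clamp r :=
  le_trans (le_min h hu1) (le_max_right _ _)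
end PCAux

namespace PCSetup
open PCAux
attribute [local instance] Classical.propDecidable

variable {V : Type*} {S : PCSetup V}

section TTfacts
variable (x : S.RK)

lemma TT_le_half_of_be (hb : be x ≠ 0) : TT x ≤ 1/2 := by
  have ha : al x = 0 := (albe x).resolve_right hb
  have hg : ga x = 0 := (bega x).resolve_left hb
  refine clamp_le ?_ (by norm_num)
  rw [pc, ha, hg]
  have := be_nonneg x; have := de_nonneg x
  linarith

lemma TT_le_half_of_de (ha : al x = 0) (hd : de x ≠ 0) : TT x ≤ 1/2 := by
  have hg : ga x = 0 := (gade x).resolve_right hd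
  refine clamp_le ?_ (by norm_num)
  rw [pc, ha, hg]
  have := be_nonneg x; have := de_nonneg x
  linarith

lemma TT_ge_half_of_ga (hg : ga x ≠ 0) : 1/2 ≤ TT x := by
  have hb : be x = 0 := (bega x).resolve_right hg
  have hd : de x = 0 := (gade x).resolve_left hg
  refine le_clamp' (by norm_num) (by norm_num) ?_
  rw [pc, hb, hd]
  have := al_nonneg x; have := ga_nonneg x
  linarith

lemma TT_ge_half_of_al (ha : al x ≠ 0) (hd : de x = 0) : 1/2 ≤ TT x := by
  have hb : be x = 0 := (albe x).resolve_left ha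
  refine le_clamp' (by norm_num) (by norm_num) ?_
  rw [pc, hb, hd]
  have := al_nonneg x; have := ga_nonneg x
  linarith

end TTfacts

/-- Transfer speed towards `d`. -/
noncomputable def th (x : S.RK) : ℝ := clamp (5 - 12 * TT x)
/-- Transfer speed towards `a`. -/
noncomputable def tp (x : S.RK) : ℝ := clamp (12 * TT x - 7)

lemma th_nonneg (x : S.RK) : 0 ≤ th x := clamp_nonneg _
lemma tp_nonneg (x : S.RK) : 0 ≤ tp x := clamp_nonneg _
lemma th_le_one (x : S.RK) : th x ≤ 1 := clamp_le_one _
lemma tp_le_one (x : S.RK) : tp x ≤ 1 := clamp_le_one _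

lemma th_eq_zero {x : S.RK} (h : 5/12 ≤ TT x) : th x = 0 :=
  clamp_of_nonpos (by rw [sub_nonpos]; linarith)
lemma tp_eq_zero {x : S.RK} (h : TT x ≤ 7/12) : tp x = 0 :=
  clamp_of_nonpos (by rw [sub_nonpos]; linarith)
lemma th_eq_one {x : S.RK} (h : TT x ≤ 1/3) : th x = 1 :=
  clamp_of_one_le (by linarith)
lemma tp_eq_one {x : S.RK} (h : 2/3 ≤ TT x) : tp x = 1 :=
  clamp_of_one_le (by linarith)

/-- The underlying function of `ψ ∘ φ`. -/
noncomputable def r0 (x : S.RK) : Sym2 V → ℝ := fun e =>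
  if e = S.eb then cb (TT x) else if e = S.ec then cc (TT x)
  else if e = S.ea then ra (TT x) * (mu x / MM x)
  else if e = S.ed then rd (TT x) * (mu x / MM x)
  else rl (TT x) * (x.1 e / MM x)

lemma r0_eb (x : S.RK) : r0 x S.eb = cb (TT x) := if_pos rfl
lemma r0_ec (x : S.RK) : r0 x S.ec = cc (TT x) := by
  rw [r0, if_neg S.eb_ne_ec.symm, if_pos rfl]
lemma r0_ea (x : S.RK) : r0 x S.ea = ra (TT x) * (mu x / MM x) := by
  rw [r0, if_neg S.ea_ne_eb, if_neg S.ea_ne_ec, if_pos rfl]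
lemma r0_ed (x : S.RK) : r0 x S.ed = rd (TT x) * (mu x / MM x) := by
  rw [r0, if_neg S.eb_ne_ed.symm, if_neg S.ec_ne_ed.symm, if_neg S.ea_ne_ed.symm, if_pos rfl]
lemma r0_else (x : S.RK) {e : Sym2 V}
    (hne : ¬(e = S.ea ∨ e = S.eb ∨ e = S.ec ∨ e = S.ed)) :
    r0 x e = rl (TT x) * (x.1 e / MM x) := by
  push_neg at hne
  rw [r0, if_neg hne.2.1, if_neg hne.2.2.1, if_neg hne.1, if_neg hne.2.2.2]

/-- The straight-line/transfer homotopy between the identity and `ψ ∘ φ`. -/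
noncomputable def zf (x : S.RK) (u v : ℝ) : Sym2 V → ℝ := fun e =>
  (1 - v) * (x.1 e
     + u * th x * al x * ((if e = S.ed then (1:ℝ) else 0) - (if e = S.ea then (1:ℝ) else 0))
     + u * tp x * de x * ((if e = S.ea then (1:ℝ) else 0) - (if e = S.ed then (1:ℝ) else 0)))
  + v * r0 x e

lemma zf_ea (x : S.RK) (u v : ℝ) :
    zf x u v S.ea = (1 - v) * (al x - u * th x * al x + u * tp x * de x)
      + v * (ra (TT x) * (mu x / MM x)) := by
  rw [zf, r0_ea, if_neg S.ea_ne_ed, if_pos rfl]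
  simp only [al, de]
  ring
lemma zf_ed (x : S.RK) (u v : ℝ) :
    zf x u v S.ed = (1 - v) * (de x + u * th x * al x - u * tp x * de x)
      + v * (rd (TT x) * (mu x / MM x)) := by
  rw [zf, r0_ed, if_pos rfl, if_neg S.ea_ne_ed.symm]
  simp only [al, de]
  ring
lemma zf_eb (x : S.RK) (u v : ℝ) :
    zf x u v S.eb = (1 - v) * be x + v * cb (TT x) := by
  rw [zf, r0_eb, if_neg S.eb_ne_ed, if_neg S.ea_ne_eb.symm]
  simp only [be]
  ring
lemma zf_ec (x : S.RK) (u v : ℝ) :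
    zf x u v S.ec = (1 - v) * ga x + v * cc (TT x) := by
  rw [zf, r0_ec, if_neg S.ec_ne_ed, if_neg S.ea_ne_ec.symm]
  simp only [ga]
  ring
lemma zf_else (x : S.RK) (u v : ℝ) {e : Sym2 V}
    (hne : ¬(e = S.ea ∨ e = S.eb ∨ e = S.ec ∨ e = S.ed)) :
    zf x u v e = ((1 - v) + v * (rl (TT x) / MM x)) * x.1 e := by
  push_neg at hne
  rw [zf, r0_else x (by push_neg; exact hne), if_neg hne.2.2.2, if_neg hne.1]
  ring

section ZFacts
variable (x : S.RK) {u v : ℝ}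

lemma zf_ea_zero (ha : al x = 0) (u v : ℝ) : zf x u v S.ea = 0 := by
  rw [zf_ea, ha]
  have hmu : mu x = 0 := by rw [mu, ha, min_eq_left (de_nonneg x)]
  rw [hmu, zero_div, mul_zero, mul_zero]
  rcases eq_or_ne (de x) 0 with hd | hd
  · rw [hd]; ring
  · rw [tp_eq_zero (le_trans (TT_le_half_of_de x ha hd) (by norm_num))]; ring

lemma zf_ed_zero (hd : de x = 0) (u v : ℝ) : zf x u v S.ed = 0 := by
  rw [zf_ed, hd]
  have hmu : mu x = 0 := by rw [mu, hd, min_eq_right (al_nonneg x)]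
  rw [hmu, zero_div, mul_zero, mul_zero]
  rcases eq_or_ne (al x) 0 with ha | ha
  · rw [ha]; ring
  · rw [th_eq_zero (le_trans (by norm_num) (TT_ge_half_of_al x ha hd))]; ring

/-- decomposition of nonvanishing of the `b`-coordinate. -/
lemma zf_eb_ne (hb : zf x u v S.eb ≠ 0) : be x ≠ 0 ∨ (v ≠ 0 ∧ cb (TT x) ≠ 0) := by
  by_contra hc
  push_neg at hc
  apply hb
  rw [zf_eb, hc.1]
  rcases eq_or_ne v 0 with hv | hv
  · rw [hv]; ring
  · rw [hc.2 hv]; ring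

lemma zf_ec_ne (hg : zf x u v S.ec ≠ 0) : ga x ≠ 0 ∨ (v ≠ 0 ∧ cc (TT x) ≠ 0) := by
  by_contra hc
  push_neg at hc
  apply hg
  rw [zf_ec, hc.1]
  rcases eq_or_ne v 0 with hv | hv
  · rw [hv]; ring
  · rw [hc.2 hv]; ring

/-- If `b` carries weight then `a` and `c` do not. -/
lemma zf_ab (huv : v ≠ 0 → u = 1) (hb : zf x u v S.eb ≠ 0) : zf x u v S.ea = 0 := by
  rcases zf_eb_ne x hb with hbe | ⟨hv, hcb⟩
  · exact zf_ea_zero x ((albe x).resolve_right hbe) u v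
  · have hT : TT x < 1/3 := cb_pos (lt_of_le_of_ne (cb_nonneg _) (Ne.symm hcb))
    rw [zf_ea, huv hv, th_eq_one hT.le, tp_eq_zero (by linarith),
      ra_eq_zero (Or.inl hT.le)]
    ring

lemma zf_cb (hb : zf x u v S.eb ≠ 0) : zf x u v S.ec = 0 := by
  rcases zf_eb_ne x hb with hbe | ⟨hv, hcb⟩
  · rw [zf_ec, (bega x).resolve_left hbe,
      cc_eq_zero (le_trans (TT_le_half_of_be x hbe) (by norm_num))]
    ring
  · have hT : TT x < 1/3 := cb_pos (lt_of_le_of_ne (cb_nonneg _) (Ne.symm hcb))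
    have hg : ga x = 0 := by
      by_contra hg
      have := TT_ge_half_of_ga x hg
      linarith
    rw [zf_ec, hg, cc_eq_zero (by linarith)]
    ring

lemma zf_cb' (hg : zf x u v S.ec ≠ 0) : zf x u v S.eb = 0 := by
  rcases zf_ec_ne x hg with hga | ⟨hv, hcc⟩
  · rw [zf_eb, (bega x).resolve_right hga,
      cb_eq_zero (le_trans (by norm_num) (TT_ge_half_of_ga x hga))]
    ring
  · have hT : 2/3 < TT x := cc_pos (lt_of_le_of_ne (cc_nonneg _) (Ne.symm hcc))
    have hb : be x = 0 := by
      by_contra hb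
      have := TT_le_half_of_be x hb
      linarith
    rw [zf_eb, hb, cb_eq_zero (by linarith)]
    ring

lemma zf_cd (huv : v ≠ 0 → u = 1) (hg : zf x u v S.ec ≠ 0) : zf x u v S.ed = 0 := by
  rcases zf_ec_ne x hg with hga | ⟨hv, hcc⟩
  · exact zf_ed_zero x ((gade x).resolve_left hga) u v
  · have hT : 2/3 < TT x := cc_pos (lt_of_le_of_ne (cc_nonneg _) (Ne.symm hcc))
    rcases eq_or_ne (de x) 0 with hd | hd
    · exact zf_ed_zero x hd u v
    · rw [zf_ed, huv hv, th_eq_zero (by linarith), tp_eq_one hT.le,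
        rd_eq_zero (Or.inr hT.le)]
      ring

end ZFacts
end PCSetup
namespace PCSetup
open PCAux
attribute [local instance] Classical.propDecidable

variable {V : Type*} {S : PCSetup V}

section ZMem
variable (x : S.RK) {u v : ℝ}

lemma r0_nonneg (e : Sym2 V) : 0 ≤ r0 x e := by
  have hdiv : 0 ≤ mu x / MM x := div_nonneg (mu_nonneg x) (MM_nonneg x)
  rw [r0]
  split
  · exact cb_nonneg _
  split
  · exact cc_nonneg _
  split
  · exact mul_nonneg (ra_nonneg _) hdiv
  split
  · exact mul_nonneg (rd_nonneg _) hdiv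
  · exact mul_nonneg (rl_nonneg _) (div_nonneg (xnn x _) (MM_nonneg x))

lemma zf_nonneg (hu0 : 0 ≤ u) (hu1 : u ≤ 1) (hv0 : 0 ≤ v) (hv1 : v ≤ 1)
    (e : Sym2 V) : 0 ≤ zf x u v e := by
  have h1v : 0 ≤ 1 - v := by linarith
  have hr0 := r0_nonneg x e
  have hth : u * th x ≤ 1 := mul_le_one₀ hu1 (th_nonneg x) (th_le_one x)
  have htp : u * tp x ≤ 1 := mul_le_one₀ hu1 (tp_nonneg x) (tp_le_one x)
  have hthn : 0 ≤ u * th x := mul_nonneg hu0 (th_nonneg x)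
  have htpn : 0 ≤ u * tp x := mul_nonneg hu0 (tp_nonneg x)
  have hal := al_nonneg x; have hde := de_nonneg x
  by_cases hea : e = S.ea
  · rw [hea, zf_ea]
    have : 0 ≤ al x - u * th x * al x + u * tp x * de x := by nlinarith
    have := r0_nonneg x S.ea
    rw [r0_ea] at this
    positivity
  by_cases hed : e = S.ed
  · rw [hed, zf_ed]
    have : 0 ≤ de x + u * th x * al x - u * tp x * de x := by nlinarith
    have := r0_nonneg x S.ed
    rw [r0_ed] at this
    positivity
  · rw [zf]
    rw [if_neg hed, if_neg hea]
    have : 0 ≤ x.1 e := xnn x e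
    have h2 : (0:ℝ) - 0 = 0 := by ring
    positivity

/-- The witnessing face for `zf`. -/
noncomputable def zface (u v : ℝ) : Finset (Sym2 V) :=
  oface x ∪ ({S.ea, S.eb, S.ec, S.ed} : Finset (Sym2 V)).filter (fun e => zf x u v e ≠ 0)

lemma zf_mem (hu0 : 0 ≤ u) (hu1 : u ≤ 1) (hv0 : 0 ≤ v) (hv1 : v ≤ 1)
    (huv : v ≠ 0 → u = 1) :
    (∀ e, 0 ≤ zf x u v e) ∧ ∃ s_ ∈ matchingComplex S.G,
      Function.support (zf x u v) ⊆ ↑s_ ∧ ∑ e ∈ s_, zf x u v e = 1 := by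
  refine ⟨zf_nonneg x hu0 hu1 hv0 hv1, zface x u v, ⟨?_, ?_⟩, ?_, ?_⟩
  · -- edges
    intro e he
    rw [zface, Finset.mem_union] at he
    rcases he with he | he
    · exact (face_mem x).1 e (Finset.mem_filter.mp he).1
    · rw [Finset.mem_filter] at he
      have := he.1
      simp only [Finset.mem_insert, Finset.mem_singleton] at this
      rcases this with rfl | rfl | rfl | rfl
      exacts [S.ea_edge, S.eb_edge, S.ec_edge, S.ed_edge]
  · -- pairwise disjoint
    have key : ∀ q ∈ ({S.ea, S.eb, S.ec, S.ed} : Finset (Sym2 V)), zf x u v q ≠ 0 →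
        ∀ f ∈ oface x, ∀ w ∈ q, w ∉ f := by
      intro q hq hq0 f hf w hw
      have hop : OP S f := op_of_oface hf
      simp only [Finset.mem_insert, Finset.mem_singleton] at hq
      rcases hq with rfl | rfl | rfl | rfl
      · have ha : al x ≠ 0 := by
          intro hc; exact hq0 (zf_ea_zero x hc u v)
        rcases S.mem_ea.mp hw with rfl | rfl
        · exact oface_avoid_v0 ha hf
        · exact hop.not_v1
      · rcases S.mem_eb.mp hw with rfl | rfl
        · exact hop.not_v1
        · exact hop.not_v2
      · rcases S.mem_ec.mp hw with rfl | rfl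
        · exact hop.not_v2
        · exact hop.not_v3
      · have hd : de x ≠ 0 := by
          intro hc; exact hq0 (zf_ed_zero x hc u v)
        rcases S.mem_ed.mp hw with rfl | rfl
        · exact hop.not_v3
        · exact oface_avoid_v4 hd hf
    intro e he f hf hef w hw
    rw [zface, Finset.mem_union] at he hf
    rcases he with he | he <;> rcases hf with hf | hf
    · exact (face_mem x).2 e (Finset.mem_filter.mp he).1 f (Finset.mem_filter.mp hf).1
        hef w hw
    · rw [Finset.mem_filter] at hf
      intro hwf
      exact key f hf.1 hf.2 e he w hwf hw
    · rw [Finset.mem_filter] at he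
      exact key e he.1 he.2 f hf w hw
    · rw [Finset.mem_filter] at he hf
      have he4 := he.1; have hf4 := hf.1
      simp only [Finset.mem_insert, Finset.mem_singleton] at he4 hf4
      rcases he4 with rfl | rfl | rfl | rfl <;> rcases hf4 with rfl | rfl | rfl | rfl
      · exact absurd rfl hef
      · exact absurd (zf_ab x huv hf.2) he.2
      · exact disj_ac w hw
      · exact disj_ad w hw
      · exact absurd (zf_ab x huv he.2) hf.2
      · exact absurd rfl hef
      · exact absurd (zf_cb x he.2) hf.2
      · exact disj_bd w hw
      · exact fun hwa => disj_ac w hwa hw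
      · exact absurd (zf_cb' x he.2) hf.2
      · exact absurd rfl hef
      · exact absurd (zf_cd x huv he.2) hf.2
      · exact fun hwa => disj_ad w hwa hw
      · exact fun hwb => disj_bd w hwb hw
      · exact absurd (zf_cd x huv hf.2) he.2
      · exact absurd rfl hef
  · -- support
    intro e he
    rw [Function.mem_support] at he
    rw [zface, Finset.coe_union, Set.mem_union]
    by_cases hp : e = S.ea ∨ e = S.eb ∨ e = S.ec ∨ e = S.ed
    · right
      rw [Finset.coe_filter]
      refine ⟨?_, he⟩
      simp only [Finset.mem_insert, Finset.mem_singleton]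
      exact hp
    · left
      rw [zf_else x u v hp] at he
      have hx : x.1 e ≠ 0 := fun hc => he (by rw [hc, mul_zero])
      rw [Finset.mem_coe, oface, Finset.mem_filter]
      exact ⟨mem_face_of_ne x hx, hp⟩
  · -- sum
    have hdisj : Disjoint (oface x)
        (({S.ea, S.eb, S.ec, S.ed} : Finset (Sym2 V)).filter (fun e => zf x u v e ≠ 0)) := by
      rw [Finset.disjoint_left]
      intro e hei hef
      rw [oface, Finset.mem_filter] at hei
      rw [Finset.mem_filter] at hef
      have := hef.1
      simp only [Finset.mem_insert, Finset.mem_singleton] at this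
      exact hei.2 this
    rw [zface, Finset.sum_union hdisj]
    have hs1 : ∑ e ∈ oface x, zf x u v e
        = (1 - v) * mm x + v * (rl (TT x) * (mm x / MM x)) := by
      have hterm : ∀ e ∈ oface x, zf x u v e
          = ((1 - v) + v * (rl (TT x) / MM x)) * x.1 e := by
        intro e hei
        rw [oface, Finset.mem_filter] at hei
        exact zf_else x u v hei.2
      refine (Finset.sum_congr rfl hterm).trans ?_
      rw [← Finset.mul_sum, sum_oface]
      field_simp
    have hs2 : ∑ e ∈ ({S.ea, S.eb, S.ec, S.ed} : Finset (Sym2 V)).filter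
        (fun e => zf x u v e ≠ 0), zf x u v e
        = zf x u v S.ea + zf x u v S.eb + zf x u v S.ec + zf x u v S.ed := by
      rw [Finset.sum_filter_of_ne (fun e _ hne => hne)]
      rw [sum_four]
    rw [hs1, hs2, zf_ea, zf_eb, zf_ec, zf_ed]
    have hRID : cb (TT x) + cc (TT x) + (ra (TT x) + rd (TT x)) * (mu x / MM x)
        + rl (TT x) * (mm x / MM x) = 1 := by
      rcases eq_or_ne (MM x) 0 with hM | hM
      · have hmu : mu x = 0 := le_antisymm (by rw [← hM]; exact mu_le_MM x) (mu_nonneg x)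
        have hmm : mm x = 0 := le_antisymm (by rw [← hM]; exact mm_le_MM x) (mm_nonneg x)
        rw [hmu, hmm, zero_div, mul_zero, mul_zero, add_zero, add_zero]
        rcases M0_TT x hM with hT | hT
        · rw [hT, cb_at0, cc_at0]; ring
        · rw [hT, cb_at1, cc_at1]; ring
      · have hw : mm x / MM x = 1 - mu x / MM x := by
          rw [eq_sub_iff_add_eq, ← add_div, div_eq_one_iff_eq hM, MM]
          ring
        rw [hw]
        exact coeff_id (TT_nonneg x) (TT_le_one x) (mu x / MM x)
    have hsum1 : al x + be x + ga x + de x + mm x = 1 := by rw [mm]; ring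
    nlinarith [hRID, hsum1]

/-- The homotopy `z` as a point of the realization. -/
noncomputable def zK (u v : ℝ) (hu0 : 0 ≤ u) (hu1 : u ≤ 1) (hv0 : 0 ≤ v) (hv1 : v ≤ 1)
    (huv : v ≠ 0 → u = 1) : S.RK :=
  ⟨zf x u v, zf_mem x hu0 hu1 hv0 hv1 huv⟩

end ZMem

lemma zf_zero (x : S.RK) : zf x 0 0 = x.1 := by
  funext e
  rw [zf]
  ring

lemma zf_one (x : S.RK) : zf x 1 1 = r0 x := by
  funext e
  rw [zf]
  ring

/-- `ψ ∘ φ` agrees with `r0`. -/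
lemma psiQ_phi (x : S.RK) : (psiQ (phi x)).1 = r0 x := by
  rw [phi]
  split
  · rename_i hM
    show psi0 (hmapR x hM) (TT x) = r0 x
    funext e
    rw [psi0, r0]
    split
    · rfl
    split
    · rfl
    split
    · rfl
    split
    · rfl
    · -- outside edges
      rename_i h1 h2 h3 h4
      show rl (TT x) * oval (hmapR x hM) e = rl (TT x) * (x.1 e / MM x)
      rw [oval]
      split
      · rfl
      · rename_i hop
        have hx : x.1 e = 0 := by
          by_contra hx
          exact hop (op_of_not_path (edge_of_ne x hx) (by push_neg; exact ⟨h3, h1, h2, h4⟩))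
        rw [hx, zero_div, mul_zero]
  · rename_i hM
    have hM0 : MM x = 0 := le_antisymm (not_lt.mp hM) (MM_nonneg x)
    have hmu : mu x = 0 := le_antisymm (by rw [← hM0]; exact mu_le_MM x) (mu_nonneg x)
    split
    · rename_i hpc
      have hT : TT x = 0 := clamp_of_nonpos hpc
      show (deltaB S).1 = r0 x
      funext e
      show (if e = S.eb then (1:ℝ) else 0) = r0 x e
      rw [r0, hT]
      by_cases h1 : e = S.eb
      · rw [if_pos h1, if_pos h1, cb_at0]
      rw [if_neg h1, if_neg h1]
      split
      · rw [cc_at0]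
      split
      · rw [ra_at0, zero_mul]
      split
      · rw [rd_at0, zero_mul]
      · rw [rl_at0, zero_mul]
    · rename_i hpc
      have hT : TT x = 1 := by
        rcases M0_pc x hM0 with h | h
        · exact absurd (by rw [h]; norm_num) hpc
        · rw [TT, h]; exact clamp_of_one_le (by norm_num)
      show (deltaC S).1 = r0 x
      funext e
      show (if e = S.ec then (1:ℝ) else 0) = r0 x e
      rw [r0, hT]
      by_cases h1 : e = S.eb
      · rw [if_pos h1, if_neg (h1 ▸ S.eb_ne_ec : ¬ e = S.ec), cb_at1]
      rw [if_neg h1]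
      by_cases h2 : e = S.ec
      · rw [if_pos h2, if_pos h2, cc_at1]
      rw [if_neg h2, if_neg h2]
      split
      · rw [ra_at1, zero_mul]
      split
      · rw [rd_at1, zero_mul]
      · rw [rl_at1, zero_mul]

end PCSetup
namespace PCAux

/-- Squeeze continuity for `ρ * (N / M)`. -/
lemma cont_mul_div {X : Type*} [TopologicalSpace X] {ρ N M : X → ℝ}
    (hρ : Continuous ρ) (hN : Continuous N) (hM : Continuous M)
    (hρ0 : ∀ x, 0 ≤ ρ x) (hN0 : ∀ x, 0 ≤ N x) (hNM : ∀ x, N x ≤ M x)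
    (hz : ∀ x, M x = 0 → ρ x = 0) :
    Continuous (fun x => ρ x * (N x / M x)) := by
  rw [continuous_iff_continuousAt]
  intro x0
  rcases eq_or_ne (M x0) 0 with h0 | h0
  · have hval : ρ x0 * (N x0 / M x0) = 0 := by rw [hz x0 h0]; ring
    rw [ContinuousAt, hval]
    have hge : ∀ x, 0 ≤ ρ x * (N x / M x) := by
      intro x
      exact mul_nonneg (hρ0 x) (div_nonneg (hN0 x) (le_trans (hN0 x) (hNM x)))
    have hle : ∀ x, ρ x * (N x / M x) ≤ ρ x := by
      intro x
      rcases eq_or_ne (M x) 0 with hMx | hMx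
      · rw [hMx, div_zero, mul_zero]; exact hρ0 x
      · have hMpos : 0 < M x := lt_of_le_of_ne (le_trans (hN0 x) (hNM x)) (Ne.symm hMx)
        exact mul_le_of_le_one_right (hρ0 x) ((div_le_one hMpos).mpr (hNM x))
    have h1 : Filter.Tendsto ρ (nhds x0) (nhds 0) := by
      have := hρ.continuousAt (x := x0)
      rwa [ContinuousAt, hz x0 h0] at this
    exact tendsto_of_tendsto_of_tendsto_of_le_of_le tendsto_const_nhds h1 hge hle
  · exact (hρ.continuousAt).mul ((hN.continuousAt).div (hM.continuousAt) h0)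

end PCAux

namespace PCSetup
open PCAux
attribute [local instance] Classical.propDecidable

variable {V : Type*} {S : PCSetup V}

lemma cont_eval (e : Sym2 V) : Continuous (fun x : S.RK => x.1 e) :=
  (continuous_apply e).comp continuous_subtype_val

lemma cont_al : Continuous (fun x : S.RK => al x) := cont_eval S.ea
lemma cont_be : Continuous (fun x : S.RK => be x) := cont_eval S.eb
lemma cont_ga : Continuous (fun x : S.RK => ga x) := cont_eval S.ec
lemma cont_de : Continuous (fun x : S.RK => de x) := cont_eval S.ed
lemma cont_mm : Continuous (fun x : S.RK => mm x) := by
  unfold mm al be ga de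
  exact (((continuous_const.sub (cont_eval S.ea)).sub (cont_eval S.eb)).sub
    (cont_eval S.ec)).sub (cont_eval S.ed)
lemma cont_mu : Continuous (fun x : S.RK => mu x) := by
  unfold mu
  exact Continuous.min cont_al cont_de
lemma cont_MM : Continuous (fun x : S.RK => MM x) := Continuous.add cont_mu cont_mm
lemma cont_pc : Continuous (fun x : S.RK => pc x) := by
  unfold pc al be ga de
  exact (((continuous_const.add (cont_eval S.ea)).add (cont_eval S.ec)).sub
    (cont_eval S.eb)).sub (cont_eval S.ed)
lemma cont_TT : Continuous (fun x : S.RK => TT x) := clamp_continuous.comp cont_pc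
lemma cont_th : Continuous (fun x : S.RK => th x) := by
  unfold th
  exact clamp_continuous.comp (continuous_const.sub (continuous_const.mul cont_TT))
lemma cont_tp : Continuous (fun x : S.RK => tp x) := by
  unfold tp
  exact clamp_continuous.comp ((continuous_const.mul cont_TT).sub continuous_const)

lemma MM0_ra {x : S.RK} (h : MM x = 0) : ra (TT x) = 0 := by
  rcases M0_TT x h with hT | hT
  · rw [hT, ra_at0]
  · rw [hT, ra_at1]
lemma MM0_rd {x : S.RK} (h : MM x = 0) : rd (TT x) = 0 := by
  rcases M0_TT x h with hT | hT
  · rw [hT, rd_at0]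
  · rw [hT, rd_at1]
lemma MM0_rl {x : S.RK} (h : MM x = 0) : rl (TT x) = 0 := by
  rcases M0_TT x h with hT | hT
  · rw [hT, rl_at0]
  · rw [hT, rl_at1]

lemma xe_le_MM (x : S.RK) {e : Sym2 V}
    (hp : ¬(e = S.ea ∨ e = S.eb ∨ e = S.ec ∨ e = S.ed)) : x.1 e ≤ MM x :=
  le_trans (xO_le_mm x hp) (mm_le_MM x)

/-- Continuity of `r0` in each coordinate. -/
lemma cont_r0 (e : Sym2 V) : Continuous (fun x : S.RK => r0 x e) := by
  by_cases h1 : e = S.eb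
  · subst h1
    simp only [r0_eb]
    exact cb_continuous.comp cont_TT
  by_cases h2 : e = S.ec
  · subst h2
    simp only [r0_ec]
    exact cc_continuous.comp cont_TT
  by_cases h3 : e = S.ea
  · subst h3
    simp only [r0_ea]
    exact cont_mul_div (ra_continuous.comp cont_TT) cont_mu cont_MM
      (fun x => ra_nonneg _) (fun x => mu_nonneg x) (fun x => mu_le_MM x)
      (fun x h => MM0_ra h)
  by_cases h4 : e = S.ed
  · subst h4
    simp only [r0_ed]
    exact cont_mul_div (rd_continuous.comp cont_TT) cont_mu cont_MM
      (fun x => rd_nonneg _) (fun x => mu_nonneg x) (fun x => mu_le_MM x)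
      (fun x h => MM0_rd h)
  · have hp : ¬(e = S.ea ∨ e = S.eb ∨ e = S.ec ∨ e = S.ed) := by
      push_neg; exact ⟨h3, h1, h2, h4⟩
    have : (fun x : S.RK => r0 x e) = fun x => rl (TT x) * (x.1 e / MM x) := by
      funext x; exact r0_else x hp
    rw [this]
    exact cont_mul_div (rl_continuous.comp cont_TT) (cont_eval e) cont_MM
      (fun x => rl_nonneg _) (fun x => xnn x e) (fun x => xe_le_MM x hp)
      (fun x h => MM0_rl h)

/-- Continuity of the homotopy `z` in each coordinate. -/
lemma cont_zf (e : Sym2 V) :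
    Continuous (fun p : (ℝ × ℝ) × S.RK => zf p.2 p.1.1 p.1.2 e) := by
  have h1 : Continuous (fun p : (ℝ × ℝ) × S.RK => p.1.1) := by fun_prop
  have h2 : Continuous (fun p : (ℝ × ℝ) × S.RK => p.1.2) := by fun_prop
  have hx : Continuous (fun p : (ℝ × ℝ) × S.RK => p.2) := continuous_snd
  unfold zf
  apply Continuous.add
  · apply Continuous.mul
    · fun_prop
    · apply Continuous.add
      · apply Continuous.add
        · exact (cont_eval e).comp hx
        · exact Continuous.mul (Continuous.mul (Continuous.mul h1 (cont_th.comp hx))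
            (cont_al.comp hx)) continuous_const
      · exact Continuous.mul (Continuous.mul (Continuous.mul h1 (cont_tp.comp hx))
          (cont_de.comp hx)) continuous_const
  · exact Continuous.mul h2 ((cont_r0 e).comp hx)

/-- Parameter profiles for the left-inverse homotopy. -/
noncomputable def uu (s : ℝ) : ℝ := min (2 * (1 - s)) 1
noncomputable def vv (s : ℝ) : ℝ := max (2 * (1 - s) - 1) 0

lemma uu_mem {s : ℝ} (h0 : 0 ≤ s) (h1 : s ≤ 1) : 0 ≤ uu s ∧ uu s ≤ 1 :=
  ⟨le_min (by linarith) (by norm_num), min_le_right _ _⟩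
lemma vv_mem {s : ℝ} (h0 : 0 ≤ s) (h1 : s ≤ 1) : 0 ≤ vv s ∧ vv s ≤ 1 :=
  ⟨le_max_right _ _, max_le (by linarith) (by norm_num)⟩
lemma uu_of_vv {s : ℝ} (h : vv s ≠ 0) : uu s = 1 := by
  rw [vv] at h
  have : 2 * (1 - s) - 1 > 0 := by
    by_contra hc
    push_neg at hc
    exact h (max_eq_right hc)
  exact min_eq_right (by linarith)

lemma uu_cont : Continuous uu := by unfold uu; fun_prop
lemma vv_cont : Continuous vv := by unfold vv; fun_prop

/-- The left-inverse homotopy, as a continuous map. -/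
noncomputable def HK : C(unitInterval × S.RK, S.RK) := by
  refine ⟨fun p => zK p.2 (uu (1 - p.1.1)) (vv (1 - p.1.1))
    (uu_mem (by linarith [p.1.2.2]) (by linarith [p.1.2.1])).1
    (uu_mem (by linarith [p.1.2.2]) (by linarith [p.1.2.1])).2
    (vv_mem (by linarith [p.1.2.2]) (by linarith [p.1.2.1])).1
    (vv_mem (by linarith [p.1.2.2]) (by linarith [p.1.2.1])).2
    uu_of_vv, ?_⟩
  apply Continuous.subtype_mk
  apply continuous_pi
  intro e
  have : Continuous (fun p : unitInterval × S.RK =>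
      ((uu (1 - p.1.1), vv (1 - p.1.1)), p.2)) := by
    refine Continuous.prodMk (Continuous.prodMk ?_ ?_) continuous_snd
    · exact uu_cont.comp (by fun_prop)
    · exact vv_cont.comp (by fun_prop)
  exact (cont_zf e).comp this

end PCSetup
namespace PCSetup
open PCAux
attribute [local instance] Classical.propDecidable

variable {V : Type*} {S : PCSetup V}

lemma cont_psi0 (e : Sym2 V) :
    Continuous (fun p : S.RL × Set.Icc (0:ℝ) 1 => psi0 p.1 p.2.1 e) := by
  have ht : Continuous (fun p : S.RL × Set.Icc (0:ℝ) 1 => (p.2 : ℝ)) :=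
    continuous_subtype_val.comp continuous_snd
  have hw : Continuous (fun p : S.RL × Set.Icc (0:ℝ) 1 => ww p.1) :=
    (continuous_apply _).comp (continuous_subtype_val.comp continuous_fst)
  by_cases h1 : e = S.eb
  · subst h1
    simp only [psi0_eb]
    exact cb_continuous.comp ht
  by_cases h2 : e = S.ec
  · subst h2
    simp only [psi0_ec]
    exact cc_continuous.comp ht
  by_cases h3 : e = S.ea
  · subst h3
    simp only [psi0_ea]
    exact (ra_continuous.comp ht).mul hw
  by_cases h4 : e = S.ed
  · subst h4
    simp only [psi0_ed]
    exact (rd_continuous.comp ht).mul hw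
  · have hp : ¬(e = S.ea ∨ e = S.eb ∨ e = S.ec ∨ e = S.ed) := by
      push_neg; exact ⟨h3, h1, h2, h4⟩
    have heq : (fun p : S.RL × Set.Icc (0:ℝ) 1 => psi0 p.1 p.2.1 e)
        = fun p => rl p.2.1 * oval p.1 e := by
      funext p; exact psi0_else p.1 p.2.1 hp
    rw [heq]
    refine (rl_continuous.comp ht).mul ?_
    unfold oval
    split
    · exact (continuous_apply _).comp (continuous_subtype_val.comp continuous_fst)
    · exact continuous_const

lemma cont_psiSum : Continuous (psiSum : (S.RL × Set.Icc (0:ℝ) 1) ⊕ Bool → S.RK) := by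
  apply Continuous.sumElim
  · apply Continuous.subtype_mk
    apply continuous_pi
    intro e
    exact cont_psi0 e
  · exact continuous_of_discreteTopology

/-- `ψ` as a continuous map. -/
noncomputable def psiQc : C(Susp S.RL, S.RK) :=
  ⟨psiQ, by
    apply (isQuotientMap_quot_mk).continuous_iff.mpr
    exact cont_psiSum⟩

/-- `φ` is continuous. -/
lemma cont_phi : Continuous (phi : S.RK → Susp S.RL) := by
  rw [continuous_iff_continuousAt]
  intro x0
  by_cases hM : 0 < MM x0
  · -- the open region `MM > 0`
    have hopen : IsOpen {x : S.RK | 0 < MM x} := isOpen_lt continuous_const cont_MM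
    refine ContinuousOn.continuousAt ?_ (hopen.mem_nhds hM)
    rw [continuousOn_iff_continuous_restrict]
    have heq : Set.domRestrict {x : S.RK | 0 < MM x} (phi : S.RK → Susp S.RL)
        = fun y => Quot.mk _ (Sum.inl (hmapR y.1 y.2, TIcc y.1)) := by
      funext y
      show phi y.1 = _
      rw [phi, dif_pos (show 0 < MM y.1 from y.2)]
    rw [heq]
    apply continuous_quot_mk.comp
    apply Continuous.comp continuous_inl
    refine Continuous.prodMk ?_ ?_
    · apply Continuous.subtype_mk
      apply continuous_pi
      intro o
      rcases o with _ | ee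
      · show Continuous fun y : {x : S.RK | 0 < MM x} => mu y.1 / MM y.1
        exact Continuous.div (cont_mu.comp continuous_subtype_val)
          (cont_MM.comp continuous_subtype_val) (fun y => ne_of_gt y.2)
      · show Continuous fun y : {x : S.RK | 0 < MM x} => y.1.1 ee.1 / MM y.1
        exact Continuous.div ((cont_eval ee.1).comp continuous_subtype_val)
          (cont_MM.comp continuous_subtype_val) (fun y => ne_of_gt y.2)
    · exact Continuous.subtype_mk (cont_TT.comp continuous_subtype_val) _
  · -- the cone regions
    have hM0 : MM x0 = 0 := le_antisymm (not_lt.mp hM) (MM_nonneg x0)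
    rcases M0_pc x0 hM0 with hpc | hpc
    · have hopen : IsOpen {x : S.RK | pc x < 0} := isOpen_lt cont_pc continuous_const
      refine ContinuousOn.continuousAt ?_ (hopen.mem_nhds (by
        show pc x0 < 0; rw [hpc]; norm_num))
      have heq : ∀ x ∈ {x : S.RK | pc x < 0},
          phi x = Quot.mk _ (Sum.inr false) := by
        intro x hx
        rw [phi]
        split
        · rename_i hMx
          refine Quot.sound ?_
          exact Or.inl ⟨clamp_of_nonpos (le_of_lt (show pc x < 0 from hx)), rfl⟩
        · rw [if_pos (le_of_lt (show pc x < 0 from hx))]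
      exact (continuousOn_const (c := Quot.mk _ (Sum.inr false))).congr heq
    · have hopen : IsOpen {x : S.RK | 1 < pc x} := isOpen_lt continuous_const cont_pc
      refine ContinuousOn.continuousAt ?_ (hopen.mem_nhds (by
        show 1 < pc x0; rw [hpc]; norm_num))
      have heq : ∀ x ∈ {x : S.RK | 1 < pc x},
          phi x = Quot.mk _ (Sum.inr true) := by
        intro x hx
        rw [phi]
        split
        · rename_i hMx
          refine Quot.sound ?_
          exact Or.inr ⟨clamp_of_one_le (le_of_lt (show 1 < pc x from hx)), rfl⟩
        · rw [if_neg (by push_neg; have : 1 < pc x := hx; linarith)]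
      exact (continuousOn_const (c := Quot.mk _ (Sum.inr true))).congr heq

/-- `φ` as a continuous map. -/
noncomputable def phic : C(S.RK, Susp S.RL) := ⟨phi, cont_phi⟩

end PCSetup
namespace PCSetup
open PCAux
attribute [local instance] Classical.propDecidable

variable {V : Type*} {S : PCSetup V}

/-- `ψ` on points of the cylinder. -/
noncomputable def psiP (p : S.RL × Set.Icc (0:ℝ) 1) : S.RK :=
  psiK p.1 p.2.1 p.2.2.1 p.2.2.2

lemma cont_psiP : Continuous (psiP : S.RL × Set.Icc (0:ℝ) 1 → S.RK) := by
  have : (psiP : S.RL × Set.Icc (0:ℝ) 1 → S.RK) = psiSum ∘ Sum.inl := rfl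
  rw [this]
  exact cont_psiSum.comp continuous_inl

lemma psiP_val (p : S.RL × Set.Icc (0:ℝ) 1) : (psiP p).1 = psi0 p.1 p.2.1 := rfl

lemma al_psiP (p : S.RL × Set.Icc (0:ℝ) 1) : al (psiP p) = ra p.2.1 * ww p.1 :=
  psi0_ea p.1 p.2.1
lemma be_psiP (p : S.RL × Set.Icc (0:ℝ) 1) : be (psiP p) = cb p.2.1 :=
  psi0_eb p.1 p.2.1
lemma ga_psiP (p : S.RL × Set.Icc (0:ℝ) 1) : ga (psiP p) = cc p.2.1 :=
  psi0_ec p.1 p.2.1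
lemma de_psiP (p : S.RL × Set.Icc (0:ℝ) 1) : de (psiP p) = rd p.2.1 * ww p.1 :=
  psi0_ed p.1 p.2.1

lemma mm_psiP (p : S.RL × Set.Icc (0:ℝ) 1) : mm (psiP p) = rl p.2.1 * (1 - ww p.1) := by
  have := coeff_id p.2.2.1 p.2.2.2 (ww p.1)
  rw [mm, al_psiP, be_psiP, ga_psiP, de_psiP]
  linarith

lemma mu_psiP_zero {p : S.RL × Set.Icc (0:ℝ) 1} (hw : ww p.1 = 0) : mu (psiP p) = 0 := by
  rw [mu, al_psiP, de_psiP, hw, mul_zero, mul_zero]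
  exact min_self 0

/-- Sum of the `φ`-image weight over the face of `h`. -/
lemma sum_hmap_psiP (p : S.RL × Set.Icc (0:ℝ) 1) (hM : 0 < MM (psiP p)) :
    ∑ o ∈ faceL p.1, hmapfun (psiP p) o = 1 := by
  have herase : ∑ o ∈ (faceL p.1).erase none, hmapfun (psiP p) o
      = mm (psiP p) / MM (psiP p) := by
    have hterm : ∀ o ∈ (faceL p.1).erase none,
        hmapfun (psiP p) o = rl p.2.1 * p.1.1 o / MM (psiP p) := by
      intro o ho
      rw [Finset.mem_erase] at ho
      obtain ⟨e, rfl⟩ := Option.ne_none_iff_exists'.mp ho.1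
      show (psiP p).1 e.1 / MM (psiP p) = _
      rw [psiP_val, psi0_op p.1 p.2.1 e.2]
    refine (Finset.sum_congr rfl hterm).trans ?_
    rw [← Finset.sum_div, ← Finset.mul_sum, sum_faceL_some, mm_psiP]
  by_cases hn : (none : Option {e : Sym2 V // OP S e}) ∈ faceL p.1
  · have := Finset.sum_erase_add (faceL p.1) (hmapfun (psiP p)) hn
    rw [herase] at this
    have hnone : hmapfun (psiP p) none = mu (psiP p) / MM (psiP p) := rfl
    rw [hnone] at this
    rw [← this, ← add_div]
    rw [div_eq_one_iff_eq (ne_of_gt hM), MM]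
    ring
  · have hw : ww p.1 = 0 := by
      by_contra hw
      exact hn (mem_faceL_of_ne p.1 hw)
    have hmu : mu (psiP p) = 0 := mu_psiP_zero hw
    rw [show (faceL p.1).erase none = faceL p.1 from Finset.erase_eq_of_notMem hn] at herase
    rw [herase, div_eq_one_iff_eq (ne_of_gt hM), MM, hmu]
    ring

/-- The interpolation on the `L` side. -/
noncomputable def hsfun (p : S.RL × Set.Icc (0:ℝ) 1) (s : ℝ) : S.MG.E → ℝ :=
  fun o => (1 - s) * hmapfun (psiP p) o + s * p.1.1 o

lemma hs_mem (p : S.RL × Set.Icc (0:ℝ) 1) {s : ℝ} (hs0 : 0 ≤ s) (hs1 : s ≤ 1)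
    (hM : 0 < MM (psiP p)) :
    (∀ o, 0 ≤ hsfun p s o) ∧ ∃ s_ ∈ Multigraph.matchingComplex S.MG,
      Function.support (hsfun p s) ⊆ ↑s_ ∧ ∑ o ∈ s_, hsfun p s o = 1 := by
  refine ⟨?_, faceL p.1, faceL_mem p.1, ?_, ?_⟩
  · intro o
    refine add_nonneg (mul_nonneg (by linarith) ?_) (mul_nonneg hs0 (hnn p.1 o))
    exact (hmap_mem (psiP p) hM).1 o
  · -- support
    intro o ho
    rw [Function.mem_support] at ho
    have : hmapfun (psiP p) o ≠ 0 ∨ p.1.1 o ≠ 0 := by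
      by_contra hc
      push_neg at hc
      exact ho (by rw [hsfun, hc.1, hc.2]; ring)
    rcases this with hh | hh
    · rcases o with _ | e
      · have hmu : mu (psiP p) ≠ 0 := by
          intro hc
          exact hh (by show mu (psiP p) / MM (psiP p) = 0; rw [hc, zero_div])
        have hw : ww p.1 ≠ 0 := by
          intro hw
          exact hmu (mu_psiP_zero hw)
        exact mem_faceL_of_ne p.1 hw
      · have hx : (psiP p).1 e.1 ≠ 0 := by
          intro hc
          exact hh (by show (psiP p).1 e.1 / MM (psiP p) = 0; rw [hc, zero_div])
        rw [psiP_val, psi0_op p.1 p.2.1 e.2] at hx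
        have : p.1.1 (some e) ≠ 0 := by
          intro hc
          rw [show (⟨e.1, e.2⟩ : {e : Sym2 V // OP S e}) = e from rfl] at hx
          exact hx (by rw [hc, mul_zero])
        exact mem_faceL_of_ne p.1 this
    · exact mem_faceL_of_ne p.1 hh
  · -- sum
    have h0 : ∑ o ∈ faceL p.1, hsfun p s o
        = ∑ o ∈ faceL p.1, ((1 - s) * hmapfun (psiP p) o + s * p.1.1 o) := rfl
    rw [h0, Finset.sum_add_distrib, ← Finset.mul_sum, ← Finset.mul_sum,
      sum_hmap_psiP p hM, sum_faceL p.1]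
    ring

/-- The interpolation as a realization point. -/
noncomputable def hsR (p : S.RL × Set.Icc (0:ℝ) 1) {s : ℝ} (hs0 : 0 ≤ s) (hs1 : s ≤ 1)
    (hM : 0 < MM (psiP p)) : S.RL :=
  ⟨hsfun p s, hs_mem p hs0 hs1 hM⟩

lemma al_deltaB : al (deltaB S) = 0 := if_neg S.ea_ne_eb
lemma be_deltaB : be (deltaB S) = 1 := if_pos rfl
lemma ga_deltaB : ga (deltaB S) = 0 := if_neg S.eb_ne_ec.symm
lemma de_deltaB : de (deltaB S) = 0 := if_neg S.eb_ne_ed.symm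
lemma MM_deltaB : MM (deltaB S) = 0 := by
  rw [MM, mu, mm, al_deltaB, be_deltaB, ga_deltaB, de_deltaB]
  norm_num
lemma pc_deltaB : pc (deltaB S) = -(1/2) := by
  rw [pc, al_deltaB, be_deltaB, ga_deltaB, de_deltaB]
  norm_num
lemma TT_deltaB : TT (deltaB S) = 0 := by
  rw [TT, pc_deltaB]
  exact clamp_of_nonpos (by norm_num)

lemma al_deltaC : al (deltaC S) = 0 := if_neg S.ea_ne_ec
lemma be_deltaC : be (deltaC S) = 0 := if_neg S.eb_ne_ec
lemma ga_deltaC : ga (deltaC S) = 1 := if_pos rfl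
lemma de_deltaC : de (deltaC S) = 0 := if_neg S.ec_ne_ed.symm
lemma MM_deltaC : MM (deltaC S) = 0 := by
  rw [MM, mu, mm, al_deltaC, be_deltaC, ga_deltaC, de_deltaC]
  norm_num
lemma pc_deltaC : pc (deltaC S) = 3/2 := by
  rw [pc, al_deltaC, be_deltaC, ga_deltaC, de_deltaC]
  norm_num
lemma TT_deltaC : TT (deltaC S) = 1 := by
  rw [TT, pc_deltaC]
  exact clamp_of_one_le (by norm_num)

lemma psiP_t0 {p : S.RL × Set.Icc (0:ℝ) 1} (ht : (p.2 : ℝ) = 0) : psiP p = deltaB S := by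
  apply Subtype.ext
  rw [psiP_val, ht, psi0_zero]

lemma psiP_t1 {p : S.RL × Set.Icc (0:ℝ) 1} (ht : (p.2 : ℝ) = 1) : psiP p = deltaC S := by
  apply Subtype.ext
  rw [psiP_val, ht, psi0_one]

end PCSetup
namespace PCSetup
open PCAux
attribute [local instance] Classical.propDecidable

variable {V : Type*} {S : PCSetup V}

/-- The intermediate "squeeze" map on cylinder points. -/
noncomputable def sprimeFun (p : S.RL × Set.Icc (0:ℝ) 1) : Susp S.RL :=
  if 0 < MM (psiP p) then suspId (Quot.mk _ (Sum.inl (p.1, TIcc (psiP p))))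
  else if pc (psiP p) ≤ 0 then suspId (Quot.mk _ (Sum.inr false))
  else suspId (Quot.mk _ (Sum.inr true))

/-- The first right-inverse homotopy, on the cylinder. -/
noncomputable def WFfun (q : (S.RL × Set.Icc (0:ℝ) 1) × unitInterval) : Susp S.RL :=
  if hM : 0 < MM (psiP q.1) then
    suspId (Quot.mk _ (Sum.inl (hsR q.1 q.2.2.1 q.2.2.2 hM, TIcc (psiP q.1))))
  else if pc (psiP q.1) ≤ 0 then suspId (Quot.mk _ (Sum.inr false))
  else suspId (Quot.mk _ (Sum.inr true))

lemma cont_WFfun :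
    Continuous (WFfun : (S.RL × Set.Icc (0:ℝ) 1) × unitInterval → Susp S.RL) := by
  rw [continuous_iff_continuousAt]
  intro q0
  by_cases hM : 0 < MM (psiP q0.1)
  · have hopen : IsOpen {q : (S.RL × Set.Icc (0:ℝ) 1) × unitInterval
        | 0 < MM (psiP q.1)} :=
      isOpen_lt continuous_const ((cont_MM.comp cont_psiP).comp continuous_fst)
    refine ContinuousOn.continuousAt ?_ (hopen.mem_nhds hM)
    rw [continuousOn_iff_continuous_restrict]
    have heq : Set.domRestrict {q : (S.RL × Set.Icc (0:ℝ) 1) × unitInterval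
          | 0 < MM (psiP q.1)} WFfun
        = fun y => Quot.mk _ (Sum.inl
            (hsR y.1.1 y.1.2.2.1 y.1.2.2.2 y.2, TIcc (psiP y.1.1))) := by
      funext y
      show WFfun y.1 = _
      rw [WFfun, dif_pos (show 0 < MM (psiP y.1.1) from y.2)]
    rw [heq]
    apply continuous_quot_mk.comp
    apply Continuous.comp continuous_inl
    have hsub : Continuous (fun y : {q : (S.RL × Set.Icc (0:ℝ) 1) × unitInterval
        | 0 < MM (psiP q.1)} => y.1) := continuous_subtype_val
    have hpsi : Continuous (fun y : {q : (S.RL × Set.Icc (0:ℝ) 1) × unitInterval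
        | 0 < MM (psiP q.1)} => psiP y.1.1) :=
      cont_psiP.comp (continuous_fst.comp hsub)
    have hMne : ∀ y : {q : (S.RL × Set.Icc (0:ℝ) 1) × unitInterval
        | 0 < MM (psiP q.1)}, MM (psiP y.1.1) ≠ 0 := fun y => ne_of_gt y.2
    have hscont : Continuous (fun y : {q : (S.RL × Set.Icc (0:ℝ) 1) × unitInterval
        | 0 < MM (psiP q.1)} => (y.1.2 : ℝ)) :=
      continuous_subtype_val.comp (continuous_snd.comp hsub)
    refine Continuous.prodMk ?_ ?_
    · apply Continuous.subtype_mk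
      apply continuous_pi
      intro o
      show Continuous fun y : {q : (S.RL × Set.Icc (0:ℝ) 1) × unitInterval
          | 0 < MM (psiP q.1)} =>
        (1 - (y.1.2 : ℝ)) * hmapfun (psiP y.1.1) o + (y.1.2 : ℝ) * y.1.1.1.1 o
      refine Continuous.add (Continuous.mul (continuous_const.sub hscont) ?_)
        (Continuous.mul hscont ?_)
      · rcases o with _ | ee
        · exact Continuous.div (cont_mu.comp hpsi) (cont_MM.comp hpsi) hMne
        · exact Continuous.div ((cont_eval ee.1).comp hpsi) (cont_MM.comp hpsi) hMne
      · exact (continuous_apply o).comp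
          (continuous_subtype_val.comp (continuous_fst.comp (continuous_fst.comp hsub)))
    · exact Continuous.subtype_mk (cont_TT.comp hpsi) _
  · have hM0 : MM (psiP q0.1) = 0 := le_antisymm (not_lt.mp hM) (MM_nonneg _)
    rcases M0_pc _ hM0 with hpc | hpc
    · have hopen : IsOpen {q : (S.RL × Set.Icc (0:ℝ) 1) × unitInterval
          | pc (psiP q.1) < 0} :=
        isOpen_lt ((cont_pc.comp cont_psiP).comp continuous_fst) continuous_const
      refine ContinuousOn.continuousAt ?_ (hopen.mem_nhds (by
        show pc (psiP q0.1) < 0; rw [hpc]; norm_num))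
      have heq : ∀ q ∈ {q : (S.RL × Set.Icc (0:ℝ) 1) × unitInterval
          | pc (psiP q.1) < 0}, WFfun q = Quot.mk _ (Sum.inr false) := by
        intro q hq
        have hq' : pc (psiP q.1) < 0 := hq
        rw [WFfun]
        split
        · exact Quot.sound (Or.inl ⟨clamp_of_nonpos (le_of_lt hq'), rfl⟩)
        · rw [if_pos (le_of_lt hq')]
      exact (continuousOn_const (c := Quot.mk _ (Sum.inr false))).congr heq
    · have hopen : IsOpen {q : (S.RL × Set.Icc (0:ℝ) 1) × unitInterval
          | 1 < pc (psiP q.1)} :=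
        isOpen_lt continuous_const ((cont_pc.comp cont_psiP).comp continuous_fst)
      refine ContinuousOn.continuousAt ?_ (hopen.mem_nhds (by
        show 1 < pc (psiP q0.1); rw [hpc]; norm_num))
      have heq : ∀ q ∈ {q : (S.RL × Set.Icc (0:ℝ) 1) × unitInterval
          | 1 < pc (psiP q.1)}, WFfun q = Quot.mk _ (Sum.inr true) := by
        intro q hq
        have hq' : 1 < pc (psiP q.1) := hq
        rw [WFfun]
        split
        · exact Quot.sound (Or.inr ⟨clamp_of_one_le (le_of_lt hq'), rfl⟩)
        · rw [if_neg (by push_neg; linarith)]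
      exact (continuousOn_const (c := Quot.mk _ (Sum.inr true))).congr heq

lemma WF_t0 {h : S.RL} {t : Set.Icc (0:ℝ) 1} (ht : (t : ℝ) = 0) (s : unitInterval) :
    WFfun ((h, t), s) = Quot.mk _ (Sum.inr false) := by
  have hP : psiP ((h, t) : S.RL × Set.Icc (0:ℝ) 1) = deltaB S := psiP_t0 ht
  have hM0 : ¬ 0 < MM (psiP ((h, t) : S.RL × Set.Icc (0:ℝ) 1)) := by
    rw [hP, MM_deltaB]; exact lt_irrefl 0
  rw [WFfun, dif_neg hM0, if_pos (by rw [hP, pc_deltaB]; norm_num)]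

lemma WF_t1 {h : S.RL} {t : Set.Icc (0:ℝ) 1} (ht : (t : ℝ) = 1) (s : unitInterval) :
    WFfun ((h, t), s) = Quot.mk _ (Sum.inr true) := by
  have hP : psiP ((h, t) : S.RL × Set.Icc (0:ℝ) 1) = deltaC S := psiP_t1 ht
  have hM0 : ¬ 0 < MM (psiP ((h, t) : S.RL × Set.Icc (0:ℝ) 1)) := by
    rw [hP, MM_deltaC]; exact lt_irrefl 0
  rw [WFfun, dif_neg hM0, if_neg (by rw [hP, pc_deltaC]; norm_num)]

lemma WF_s0 (p : S.RL × Set.Icc (0:ℝ) 1) :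
    WFfun (p, 0) = phi (psiP p) := by
  rw [WFfun, phi]
  by_cases hM : 0 < MM (psiP p)
  · rw [dif_pos hM, dif_pos hM]
    refine congrArg _ (congrArg _ (congrArg _ (congrArg (fun y => (y, TIcc (psiP p))) ?_)))
    apply Subtype.ext
    funext o
    show (1 - ((0 : unitInterval) : ℝ)) * hmapfun (psiP p) o
        + ((0 : unitInterval) : ℝ) * p.1.1 o = hmapfun (psiP p) o
    norm_num
  · rw [dif_neg hM, dif_neg hM]

lemma WF_s1 (p : S.RL × Set.Icc (0:ℝ) 1) :
    WFfun (p, 1) = sprimeFun p := by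
  rw [WFfun, sprimeFun]
  by_cases hM : 0 < MM (psiP p)
  · rw [dif_pos hM, if_pos hM]
    refine congrArg _ (congrArg _ (congrArg _ (congrArg (fun y => (y, TIcc (psiP p))) ?_)))
    apply Subtype.ext
    funext o
    show (1 - ((1 : unitInterval) : ℝ)) * hmapfun (psiP p) o
        + ((1 : unitInterval) : ℝ) * p.1.1 o = p.1.1 o
    norm_num
  · rw [dif_neg hM, if_neg hM]

end PCSetup
namespace PCSetup
open PCAux
attribute [local instance] Classical.propDecidable

variable {V : Type*} {S : PCSetup V}

lemma WG_coord_mem (p : S.RL × Set.Icc (0:ℝ) 1) (s : unitInterval) :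
    (1 - (s : ℝ)) * TT (psiP p) + (s : ℝ) * (p.2 : ℝ) ∈ Set.Icc (0:ℝ) 1 := by
  have h1 := TT_nonneg (psiP p); have h2 := TT_le_one (psiP p)
  have h3 := p.2.2.1; have h4 := p.2.2.2
  have h5 := s.2.1; have h6 := s.2.2
  constructor
  · have : (0:ℝ) ≤ 1 - (s : ℝ) := by linarith
    nlinarith
  · nlinarith

/-- The second right-inverse homotopy, on the cylinder. -/
noncomputable def WGfun (q : (S.RL × Set.Icc (0:ℝ) 1) × unitInterval) : Susp S.RL :=
  Quot.mk _ (Sum.inl (q.1.1,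
    ⟨(1 - (q.2 : ℝ)) * TT (psiP q.1) + (q.2 : ℝ) * (q.1.2 : ℝ), WG_coord_mem q.1 q.2⟩))

lemma cont_WGfun :
    Continuous (WGfun : (S.RL × Set.Icc (0:ℝ) 1) × unitInterval → Susp S.RL) := by
  apply continuous_quot_mk.comp
  apply Continuous.comp continuous_inl
  refine Continuous.prodMk (continuous_fst.comp continuous_fst) ?_
  apply Continuous.subtype_mk
  have hs : Continuous (fun q : (S.RL × Set.Icc (0:ℝ) 1) × unitInterval => (q.2 : ℝ)) :=
    continuous_subtype_val.comp continuous_snd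
  have hT : Continuous (fun q : (S.RL × Set.Icc (0:ℝ) 1) × unitInterval =>
      TT (psiP q.1)) := (cont_TT.comp cont_psiP).comp continuous_fst
  have ht : Continuous (fun q : (S.RL × Set.Icc (0:ℝ) 1) × unitInterval =>
      (q.1.2 : ℝ)) := continuous_subtype_val.comp (continuous_snd.comp continuous_fst)
  exact ((continuous_const.sub hs).mul hT).add (hs.mul ht)

lemma WG_t0 {h : S.RL} {t : Set.Icc (0:ℝ) 1} (ht : (t : ℝ) = 0) (s : unitInterval) :
    WGfun ((h, t), s) = Quot.mk _ (Sum.inr false) := by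
  refine Quot.sound (Or.inl ⟨?_, rfl⟩)
  show (1 - (s : ℝ)) * TT (psiP ((h, t) : S.RL × Set.Icc (0:ℝ) 1))
      + (s : ℝ) * (t : ℝ) = 0
  rw [psiP_t0 ht, TT_deltaB, ht]
  ring

lemma WG_t1 {h : S.RL} {t : Set.Icc (0:ℝ) 1} (ht : (t : ℝ) = 1) (s : unitInterval) :
    WGfun ((h, t), s) = Quot.mk _ (Sum.inr true) := by
  refine Quot.sound (Or.inr ⟨?_, rfl⟩)
  show (1 - (s : ℝ)) * TT (psiP ((h, t) : S.RL × Set.Icc (0:ℝ) 1))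
      + (s : ℝ) * (t : ℝ) = 1
  rw [psiP_t1 ht, TT_deltaC, ht]
  ring

lemma WG_s0 (p : S.RL × Set.Icc (0:ℝ) 1) :
    WGfun (p, 0) = sprimeFun p := by
  rw [WGfun, sprimeFun]
  by_cases hM : 0 < MM (psiP p)
  · rw [if_pos hM]
    refine congrArg _ (congrArg _ (congrArg (fun y => (p.1, y)) ?_))
    apply Subtype.ext
    show (1 - ((0 : unitInterval) : ℝ)) * TT (psiP p)
        + ((0 : unitInterval) : ℝ) * (p.2 : ℝ) = TT (psiP p)
    norm_num
  · rw [if_neg hM]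
    have hM0 : MM (psiP p) = 0 := le_antisymm (not_lt.mp hM) (MM_nonneg _)
    rcases M0_pc _ hM0 with hpc | hpc
    · rw [if_pos (by rw [hpc]; norm_num)]
      refine Quot.sound (Or.inl ⟨?_, rfl⟩)
      show (1 - ((0 : unitInterval) : ℝ)) * TT (psiP p)
          + ((0 : unitInterval) : ℝ) * (p.2 : ℝ) = 0
      rw [TT, hpc]
      rw [clamp_of_nonpos (by norm_num)]
      norm_num
    · rw [if_neg (by rw [hpc]; norm_num)]
      refine Quot.sound (Or.inr ⟨?_, rfl⟩)
      show (1 - ((0 : unitInterval) : ℝ)) * TT (psiP p)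
          + ((0 : unitInterval) : ℝ) * (p.2 : ℝ) = 1
      rw [TT, hpc]
      rw [clamp_of_one_le (by norm_num)]
      norm_num

lemma WG_s1 (p : S.RL × Set.Icc (0:ℝ) 1) :
    WGfun (p, 1) = Quot.mk _ (Sum.inl p) := by
  rw [WGfun]
  refine congrArg _ (congrArg _ ?_)
  have : (⟨(1 - ((1 : unitInterval) : ℝ)) * TT (psiP p)
      + ((1 : unitInterval) : ℝ) * (p.2 : ℝ), WG_coord_mem p 1⟩ : Set.Icc (0:ℝ) 1)
      = p.2 := by
    apply Subtype.ext
    show (1 - ((1 : unitInterval) : ℝ)) * TT (psiP p)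
        + ((1 : unitInterval) : ℝ) * (p.2 : ℝ) = (p.2 : ℝ)
    norm_num
  rw [this]

/-- Lift a cylinder homotopy to the suspension. -/
noncomputable def liftCyl (W : C((S.RL × Set.Icc (0:ℝ) 1) × unitInterval, Susp S.RL))
    (h0 : ∀ (h : S.RL) (t : Set.Icc (0:ℝ) 1), (t : ℝ) = 0 →
      ∀ s, W ((h, t), s) = Quot.mk _ (Sum.inr false))
    (h1 : ∀ (h : S.RL) (t : Set.Icc (0:ℝ) 1), (t : ℝ) = 1 →
      ∀ s, W ((h, t), s) = Quot.mk _ (Sum.inr true)) :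
    C(Susp S.RL × unitInterval, Susp S.RL) := by
  refine ContinuousMap.uncurry ⟨fun z => Quot.lift
    (Sum.elim W.curry (fun b => ContinuousMap.const unitInterval
      (Quot.mk _ (Sum.inr b)))) ?_ z, ?_⟩
  · rintro (⟨h, t⟩ | b) (⟨h', t'⟩ | b') hrel
    · exact absurd hrel not_false
    · rcases hrel with ⟨ht, rfl⟩ | ⟨ht, rfl⟩
      · exact ContinuousMap.ext (fun s => h0 h t ht s)
      · exact ContinuousMap.ext (fun s => h1 h t ht s)
    · exact absurd hrel not_false
    · exact absurd hrel not_false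
  · apply (isQuotientMap_quot_mk).continuous_iff.mpr
    exact Continuous.sumElim (ContinuousMap.continuous _)
      continuous_of_discreteTopology

lemma liftCyl_inl (W : C((S.RL × Set.Icc (0:ℝ) 1) × unitInterval, Susp S.RL))
    {h0 h1} (p : S.RL × Set.Icc (0:ℝ) 1) (s : unitInterval) :
    liftCyl W h0 h1 (Quot.mk _ (Sum.inl p), s) = W (p, s) := rfl

lemma liftCyl_inr (W : C((S.RL × Set.Icc (0:ℝ) 1) × unitInterval, Susp S.RL))
    {h0 h1} (b : Bool) (s : unitInterval) :
    liftCyl W h0 h1 (Quot.mk _ (Sum.inr b), s) = Quot.mk _ (Sum.inr b) := rfl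

end PCSetup
namespace PCSetup
open PCAux
attribute [local instance] Classical.propDecidable

variable {V : Type*} {S : PCSetup V}

lemma phi_deltaB : phi (deltaB S) = Quot.mk _ (Sum.inr false) := by
  rw [phi, dif_neg (by rw [MM_deltaB]; exact lt_irrefl 0),
    if_pos (by rw [pc_deltaB]; norm_num)]

lemma phi_deltaC : phi (deltaC S) = Quot.mk _ (Sum.inr true) := by
  rw [phi, dif_neg (by rw [MM_deltaC]; exact lt_irrefl 0),
    if_neg (by rw [pc_deltaC]; norm_num)]

/-- First right-inverse homotopy, lifted. -/
noncomputable def HF : C(Susp S.RL × unitInterval, Susp S.RL) :=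
  liftCyl ⟨WFfun, cont_WFfun⟩ (fun h t ht s => WF_t0 ht s) (fun h t ht s => WF_t1 ht s)

/-- Second right-inverse homotopy, lifted. -/
noncomputable def HG : C(Susp S.RL × unitInterval, Susp S.RL) :=
  liftCyl ⟨WGfun, cont_WGfun⟩ (fun h t ht s => WG_t0 ht s) (fun h t ht s => WG_t1 ht s)

/-- The intermediate squeeze map. -/
noncomputable def Sc : C(Susp S.RL, Susp S.RL) :=
  ⟨fun z => HF (z, 1), (ContinuousMap.continuous HF).comp
    (continuous_id.prodMk continuous_const)⟩

/-- The swap map. -/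
noncomputable def swapIS : C(unitInterval × Susp S.RL, Susp S.RL × unitInterval) :=
  ⟨Homeomorph.prodComm _ _, (Homeomorph.prodComm _ _).continuous⟩

/-- Homotopy from `φ ∘ ψ` to the squeeze map. -/
noncomputable def homotopy1 : ContinuousMap.Homotopy (phic.comp psiQc) (Sc (S := S)) := by
  refine ContinuousMap.Homotopy.mk (HF.comp swapIS) ?_ ?_
  · intro z
    show HF (z, 0) = phi (psiQ z)
    induction z using Quot.ind with
    | _ p =>
      rcases p with p | b
      · show WFfun (p, 0) = phi (psiQ (Quot.mk _ (Sum.inl p)))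
        rw [WF_s0]
        rfl
      · show Quot.mk _ (Sum.inr b) = phi (psiSum (Sum.inr b))
        cases b
        · rw [show psiSum (Sum.inr false) = deltaB S from rfl, phi_deltaB]
        · rw [show psiSum (Sum.inr true) = deltaC S from rfl, phi_deltaC]
  · intro z
    rfl

/-- Homotopy from the squeeze map to the identity. -/
noncomputable def homotopy2 :
    ContinuousMap.Homotopy (Sc (S := S)) (ContinuousMap.id (Susp S.RL)) := by
  refine ContinuousMap.Homotopy.mk (HG.comp swapIS) ?_ ?_
  · intro z
    show HG (z, 0) = Sc z
    induction z using Quot.ind with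
    | _ p =>
      rcases p with p | b
      · show WGfun (p, 0) = HF (Quot.mk _ (Sum.inl p), 1)
        rw [WG_s0]
        show sprimeFun p = WFfun (p, 1)
        rw [WF_s1]
      · rfl
  · intro z
    show HG (z, 1) = z
    induction z using Quot.ind with
    | _ p =>
      rcases p with p | b
      · show WGfun (p, 1) = Quot.mk _ (Sum.inl p)
        exact WG_s1 p
      · rfl

/-- Homotopy from the identity to `ψ ∘ φ`. -/
noncomputable def homotopyId :
    ContinuousMap.Homotopy (ContinuousMap.id S.RK) (psiQc.comp phic) := by
  refine ContinuousMap.Homotopy.mk HK ?_ ?_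
  · intro x
    apply Subtype.ext
    show zf x (uu (1 - ((0 : unitInterval) : ℝ))) (vv (1 - ((0 : unitInterval) : ℝ))) = x.1
    have hu : uu (1 - ((0 : unitInterval) : ℝ)) = 0 := by
      show uu (1 - 0) = 0
      rw [uu]
      norm_num
    have hv : vv (1 - ((0 : unitInterval) : ℝ)) = 0 := by
      show vv (1 - 0) = 0
      rw [vv]
      norm_num
    rw [hu, hv, zf_zero]
  · intro x
    apply Subtype.ext
    show zf x (uu (1 - ((1 : unitInterval) : ℝ))) (vv (1 - ((1 : unitInterval) : ℝ)))
      = (psiQ (phi x)).1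
    have hu : uu (1 - ((1 : unitInterval) : ℝ)) = 1 := by
      show uu (1 - 1) = 1
      rw [uu]
      norm_num
    have hv : vv (1 - ((1 : unitInterval) : ℝ)) = 1 := by
      show vv (1 - 1) = 1
      rw [vv]
      norm_num
    rw [hu, hv, zf_one, psiQ_phi]

/-- The bundled homotopy equivalence. -/
noncomputable def theEquiv : ContinuousMap.HomotopyEquiv S.RK (Susp S.RL) :=
  ContinuousMap.HomotopyEquiv.mk phic psiQc
    ⟨(homotopyId (S := S)).symm⟩
    ⟨(homotopy1 (S := S)).trans (homotopy2 (S := S))⟩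

end PCSetup
/-- Contracting a path `X` of length 4 with internal vertices of degree 2 (and distinct
endpoints) to a single edge suspends the matching complex: `M(G) ≃ Σ M(G/X)`.  The
contraction `G/X` may be a multigraph with an edge parallel to an existing edge. -/
theorem matchingComplex_homotopyEquiv_susp_contract_path_four
    {V : Type*} (G : SimpleGraph V) (v0 v1 v2 v3 v4 : V)
    (hnodup : ([v0, v1, v2, v3, v4] : List V).Nodup)
    (h01 : G.Adj v0 v1) (h12 : G.Adj v1 v2) (h23 : G.Adj v2 v3) (h34 : G.Adj v3 v4)
    (hd1 : (G.neighborSet v1).ncard = 2) (hd2 : (G.neighborSet v2).ncard = 2)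
    (hd3 : (G.neighborSet v3).ncard = 2) :
    Nonempty (ContinuousMap.HomotopyEquiv (realization (matchingComplex G))
      (Susp (realization (Multigraph.matchingComplex
        (⟨Option {e : Sym2 V // e ∈ G.edgeSet ∧
            e ∉ ({s(v0, v1), s(v1, v2), s(v2, v3), s(v3, v4)} : Set (Sym2 V))},
          fun o => o.elim s(v0, v4) Subtype.val⟩ : Multigraph V))))) := by
  let S : PCSetup V := ⟨G, v0, v1, v2, v3, v4, hnodup, h01, h12, h23, h34, hd1, hd2, hd3⟩
  exact ⟨PCSetup.theEquiv (S := S)⟩
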